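/- arXiv:2602.16549 — 6 statements merged into one kernel-verified Lean document; each statement's English description precedes it below -/
import Mathlib

section
/- Φ is continuously differentiable on (-ℓ,ℓ) with Φ'(x) = -(4/5) x U(x) for all x ∈ (-ℓ,ℓ), and consequently Φ(x) > 0 for all x ∈ (-ℓ,ℓ). -/
open MeasureTheory Set

set_option linter.unusedVariables false

noncomputable def opL (U V : ℝ → ℝ) : ℝ → ℝ := fun x =>
  U x * iteratedDeriv 4 V x + 4 * deriv U x * iteratedDeriv 3 V x
    + (6 * iteratedDeriv 2 U x - (U x)^3) * iteratedDeriv 2 V x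
    + (4/5) * x * deriv V x + V x / 5

noncomputable def Phi (U : ℝ → ℝ) : ℝ → ℝ := fun x =>
  2 * (deriv U x)^2 - 4 * U x * iteratedDeriv 2 U x + (U x)^4

noncomputable def semSq (l : ℝ) (j : ℕ) (V : ℝ → ℝ) : ℝ :=
  ∫ x in (-l)..l, (l^2 - x^2)^(j+2) * (iteratedDeriv j V x)^2

noncomputable def normSq (l : ℝ) (k : ℕ) (V : ℝ → ℝ) : ℝ :=
  ∑ j ∈ Finset.range (k+1), semSq l j V

noncomputable def hnorm (l : ℝ) (k : ℕ) (V : ℝ → ℝ) : ℝ := Real.sqrt (normSq l k V)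

noncomputable def uSq (l : ℝ) (U V : ℝ → ℝ) : ℝ := ∫ x in (-l)..l, U x * (V x)^2

noncomputable def u2Sq (l : ℝ) (U V : ℝ → ℝ) : ℝ :=
  (1/5) * (∫ x in (-l)..l, U x * (V x)^2)
  + (∫ x in (-l)..l, Phi U x * (deriv V x)^2)
  + (∫ x in (-l)..l, (U x)^2 * (iteratedDeriv 2 V x)^2)

noncomputable def DZ (V f : ℝ → ℝ) : ℝ → ℝ := fun x => (1 + deriv V x)⁻¹ * deriv f x

noncomputable def Theta (U V : ℝ → ℝ) : ℝ → ℝ := fun x => U x * (1 + deriv V x)⁻¹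

noncomputable def Nnl (U V : ℝ → ℝ) : ℝ → ℝ := fun x =>
  opL U V x + DZ V (DZ V (DZ V (Theta U V))) x - (Theta U V x)^2 * DZ V (Theta U V) x
    - (x + V x) / 5

theorem contdiff_iter (U : ℝ → ℝ) (hU : ContDiff ℝ (⊤ : ℕ∞) U) (n : ℕ) :
    ContDiff ℝ (⊤ : ℕ∞) (iteratedDeriv n U) := by
  induction n with
  | zero => simpa [iteratedDeriv_zero] using hU
  | succ n ih =>
    rw [iteratedDeriv_succ]
    have ih' : ContDiff ℝ (((⊤ : ℕ∞) : WithTop ℕ∞) + 1) (iteratedDeriv n U) := ih.of_le (by exact_mod_cast le_top)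
    exact (contDiff_succ_iff_deriv.mp ih').2.2

theorem hd_iter (U : ℝ → ℝ) (hU : ContDiff ℝ (⊤ : ℕ∞) U) (n : ℕ) (x : ℝ) :
    HasDerivAt (iteratedDeriv n U) (iteratedDeriv (n+1) U x) x := by
  have h := ((contdiff_iter U hU n).differentiable (by simp) x).hasDerivAt
  rw [iteratedDeriv_succ]
  exact h

theorem stmt0 (l : ℝ) (hl : 0 < l) (U : ℝ → ℝ) (hU : ContDiff ℝ (⊤ : ℕ∞) U)
    (hUeven : ∀ x : ℝ, U (-x) = U x)
    (hUpos : ∀ x ∈ Set.Ioo (-l) l, 0 < U x)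
    (hUl : U l = 0) (hUml : U (-l) = 0)
    (hU'l : deriv U l = 0) (hU'ml : deriv U (-l) = 0)
    (hU''l : 0 < iteratedDeriv 2 U l) (hU''ml : 0 < iteratedDeriv 2 U (-l))
    (hODE : ∀ x ∈ Set.Ioo (-l) l, iteratedDeriv 3 U x = (U x)^2 * deriv U x + x/5) :
    ContDiffOn ℝ 1 (Phi U) (Set.Ioo (-l) l) ∧
    (∀ x ∈ Set.Ioo (-l) l, HasDerivAt (Phi U) (-(4/5) * x * U x) x) ∧
    (∀ x ∈ Set.Ioo (-l) l, 0 < Phi U x) := by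
  have hd1 : ∀ x, deriv U x = iteratedDeriv 1 U x := by
    intro x; rw [iteratedDeriv_one]
  have hPhiC : ContDiff ℝ (⊤ : ℕ∞) (Phi U) := by
    unfold Phi
    have h0 := contdiff_iter U hU 0
    have h1 := contdiff_iter U hU 1
    have h2 := contdiff_iter U hU 2
    simp only [iteratedDeriv_zero, iteratedDeriv_one] at *
    exact ((contDiff_const.mul (h1.pow 2)).sub
      ((contDiff_const.mul hU).mul h2)).add (hU.pow 4)
  have hder : ∀ x ∈ Set.Ioo (-l) l, HasDerivAt (Phi U) (-(4/5) * x * U x) x := by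
    intro x hx
    have h0 : HasDerivAt U (deriv U x) x := by
      have := hd_iter U hU 0 x
      simpa [iteratedDeriv_one] using this
    have h1 : HasDerivAt (deriv U) (iteratedDeriv 2 U x) x := by
      have := hd_iter U hU 1 x
      have e : deriv U = iteratedDeriv 1 U := by funext y; rw [iteratedDeriv_one]
      rwa [e]
    have h2 : HasDerivAt (iteratedDeriv 2 U) (iteratedDeriv 3 U x) x := hd_iter U hU 2 x
    have H : HasDerivAt (Phi U)
        (2 * (2 * deriv U x * iteratedDeriv 2 U x)
          - (4 * deriv U x * iteratedDeriv 2 U x + 4 * U x * iteratedDeriv 3 U x)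
          + 4 * (U x)^3 * deriv U x) x := by
      have hA : HasDerivAt (fun y => 2 * (deriv U y)^2)
          (2 * (2 * deriv U x * iteratedDeriv 2 U x)) x := by
        have := (h1.pow 2).const_mul (2 : ℝ)
        exact this.congr_deriv (by push_cast; ring)
      have hB : HasDerivAt (fun y => 4 * U y * iteratedDeriv 2 U y)
          (4 * deriv U x * iteratedDeriv 2 U x + 4 * U x * iteratedDeriv 3 U x) x := by
        have := ((h0.const_mul (4:ℝ)).mul h2)
        exact this.congr_deriv (by ring)
      have hC : HasDerivAt (fun y => (U y)^4) (4 * (U x)^3 * deriv U x) x := by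
        have := h0.pow 4
        exact this.congr_deriv (by push_cast; ring)
      exact (hA.sub hB).add hC
    have := hODE x hx
    convert H using 1
    rw [this]; ring
  refine ⟨(hPhiC.of_le (by simp)).contDiffOn, hder, ?_⟩
  have hPhil : Phi U l = 0 := by simp [Phi, hUl, hU'l]
  have hPhiml : Phi U (-l) = 0 := by simp [Phi, hUml, hU'ml]
  have hcont : Continuous (Phi U) := hPhiC.continuous
  intro x hx
  obtain ⟨hx1, hx2⟩ := hx
  rcases le_or_gt 0 x with hx0 | hx0
  · -- Phi strictly decreasing on Icc x l
    have hanti : StrictAntiOn (Phi U) (Set.Icc x l) := by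
      apply strictAntiOn_of_deriv_neg (convex_Icc x l) hcont.continuousOn
      intro y hy
      rw [interior_Icc] at hy
      have hyI : y ∈ Set.Ioo (-l) l := ⟨lt_trans (by linarith [hy.1]) hy.1, hy.2⟩
      rw [(hder y hyI).deriv]
      have hUy := hUpos y hyI
      have : (0:ℝ) < y := lt_of_le_of_lt hx0 hy.1
      nlinarith
    have := hanti ⟨le_refl x, le_of_lt hx2⟩ ⟨hx2.le, le_refl l⟩ hx2
    rwa [hPhil] at this
  · -- Phi strictly increasing on Icc (-l) x
    have hmono : StrictMonoOn (Phi U) (Set.Icc (-l) x) := by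
      apply strictMonoOn_of_deriv_pos (convex_Icc (-l) x) hcont.continuousOn
      intro y hy
      rw [interior_Icc] at hy
      have hyI : y ∈ Set.Ioo (-l) l := ⟨hy.1, lt_trans hy.2 (by linarith)⟩
      rw [(hder y hyI).deriv]
      have hUy := hUpos y hyI
      have : y < 0 := lt_trans hy.2 hx0
      nlinarith
    have := hmono ⟨le_refl (-l), le_of_lt hx1⟩ ⟨le_of_lt hx1, le_refl x⟩ hx1
    rwa [hPhiml] at this
end

section
/- There exist constants 0 < c ≤ C < ∞ (depending on ℓ and U) such that for all x ∈ (-ℓ,ℓ): c (ℓ²-x²)² ≤ U(x) ≤ C (ℓ²-x²)², c (ℓ²-x²)³ ≤ Φ(x) ≤ C (ℓ²-x²)³, |U'(x)| ≤ C (ℓ²-x²), |Φ'(x)| ≤ C (ℓ²-x²)², and |Φ''(x)| ≤ C (ℓ²-x²). -/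
open MeasureTheory Set

set_option linter.unusedVariables false
set_option maxHeartbeats 1000000

private lemma iter2_eq (f : ℝ → ℝ) : iteratedDeriv 2 f = deriv (deriv f) := by
  simp [iteratedDeriv_succ, iteratedDeriv_zero]

private lemma iter3_eq (f : ℝ → ℝ) : iteratedDeriv 3 f = deriv (deriv (deriv f)) := by
  simp [iteratedDeriv_succ, iteratedDeriv_zero]

private lemma deriv_neg_comp (f : ℝ → ℝ) (hf : Differentiable ℝ f) (x : ℝ) :
    deriv (fun y => f (-y)) x = -deriv f (-x) := by
  have h := ((hf (-x)).hasDerivAt.comp x (hasDerivAt_neg x))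
  have h2 := h.deriv
  simp at h2
  exact h2

theorem stmt4 (l : ℝ) (hl : 0 < l) (U : ℝ → ℝ) (hU : ContDiff ℝ (⊤ : ℕ∞) U)
    (hUeven : ∀ x : ℝ, U (-x) = U x)
    (hUpos : ∀ x ∈ Set.Ioo (-l) l, 0 < U x)
    (hUl : U l = 0) (hUml : U (-l) = 0)
    (hU'l : deriv U l = 0) (hU'ml : deriv U (-l) = 0)
    (hU''l : 0 < iteratedDeriv 2 U l) (hU''ml : 0 < iteratedDeriv 2 U (-l))
    (hODE : ∀ x ∈ Set.Ioo (-l) l, iteratedDeriv 3 U x = (U x)^2 * deriv U x + x/5) :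
    ∃ c C : ℝ, 0 < c ∧ c ≤ C ∧
      ∀ x ∈ Set.Ioo (-l) l,
        c * (l^2 - x^2)^2 ≤ U x ∧ U x ≤ C * (l^2 - x^2)^2 ∧
        c * (l^2 - x^2)^3 ≤ Phi U x ∧ Phi U x ≤ C * (l^2 - x^2)^3 ∧
        |deriv U x| ≤ C * (l^2 - x^2) ∧
        |deriv (Phi U) x| ≤ C * (l^2 - x^2)^2 ∧
        |iteratedDeriv 2 (Phi U) x| ≤ C * (l^2 - x^2) := by
  -- Smoothness facts
  have hUinf : ContDiff ℝ (↑(⊤:ℕ∞)) U := hU.of_le (by simp)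
  have hU1 : ContDiff ℝ (↑(⊤:ℕ∞)) (deriv U) := (contDiff_infty_iff_deriv.mp hUinf).2
  have hU2 : ContDiff ℝ (↑(⊤:ℕ∞)) (deriv (deriv U)) := (contDiff_infty_iff_deriv.mp hU1).2
  have hU3 : ContDiff ℝ (↑(⊤:ℕ∞)) (deriv (deriv (deriv U))) := (contDiff_infty_iff_deriv.mp hU2).2
  have hd0 : Differentiable ℝ U := hUinf.differentiable (by simp)
  have hd1 : Differentiable ℝ (deriv U) := hU1.differentiable (by simp)
  have hd2 : Differentiable ℝ (deriv (deriv U)) := hU2.differentiable (by simp)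
  have hc0 : Continuous U := hd0.continuous
  have hc1 : Continuous (deriv U) := hd1.continuous
  have hc2 : Continuous (deriv (deriv U)) := hd2.continuous
  have hc3 : Continuous (deriv (deriv (deriv U))) := hU3.continuous
  -- Symmetry facts
  have hodd : ∀ x : ℝ, deriv U (-x) = -deriv U x := by
    intro x
    have h1 : deriv (fun y => U (-y)) x = -deriv U (-x) := deriv_neg_comp U hd0 x
    have h2 : (fun y => U (-y)) = U := funext hUeven
    rw [h2] at h1
    linarith
  have heven2 : ∀ x : ℝ, deriv (deriv U) (-x) = deriv (deriv U) x := by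
    intro x
    have h1 : deriv (fun y => deriv U (-y)) x = -deriv (deriv U) (-x) :=
      deriv_neg_comp (deriv U) hd1 x
    have h2 : (fun y => deriv U (-y)) = fun y => -(deriv U y) := funext fun y => hodd y
    rw [h2, deriv.fun_neg] at h1
    linarith
  -- FTC representations
  have hU'eq : ∀ x : ℝ, deriv U x = ∫ t in (-l)..x, deriv (deriv U) t := by
    intro x
    have h := intervalIntegral.integral_eq_sub_of_hasDerivAt
      (f := deriv U) (f' := deriv (deriv U)) (a := -l) (b := x)
      (fun t _ => (hd1 t).hasDerivAt) (hc2.intervalIntegrable _ _)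
    rw [hU'ml, sub_zero] at h
    exact h.symm
  have hUeq : ∀ x : ℝ, U x = ∫ t in (-l)..x, deriv U t := by
    intro x
    have h := intervalIntegral.integral_eq_sub_of_hasDerivAt
      (f := U) (f' := deriv U) (a := -l) (b := x)
      (fun t _ => (hd0 t).hasDerivAt) (hc1.intervalIntegrable _ _)
    rw [hUml, sub_zero] at h
    exact h.symm
  -- Constants
  set A := deriv (deriv U) (-l) with hAdef
  have hA : 0 < A := by
    have := hU''ml
    rwa [iter2_eq] at this
  obtain ⟨δ₀, hδ₀pos, hδ₀⟩ := Metric.continuousAt_iff.mp (hc2.continuousAt (x := -l)) (A/2)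
    (half_pos hA)
  set δ : ℝ := min (δ₀/2) l with hδdef
  have hδpos : 0 < δ := lt_min (half_pos hδ₀pos) hl
  have hδl : δ ≤ l := min_le_right _ _
  have hδlt : ∀ t ∈ Icc (-l) (-l + δ), A/2 ≤ deriv (deriv U) t := by
    intro t ht
    have hd : dist t (-l) < δ₀ := by
      rw [Real.dist_eq]
      have h1 : t - (-l) ≥ 0 := by linarith [ht.1]
      have h2 : t - (-l) ≤ δ := by linarith [ht.2]
      rw [abs_of_nonneg h1]
      have : δ ≤ δ₀/2 := min_le_left _ _
      linarith
    have := hδ₀ hd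
    rw [Real.dist_eq] at this
    have := abs_lt.mp this
    linarith [this.1]
  obtain ⟨M0, hM0⟩ := isCompact_Icc.exists_bound_of_continuousOn (s := Icc (-l) l)
    hc2.continuousOn
  set M : ℝ := max M0 1 with hMdef
  have hM1 : (1:ℝ) ≤ M := le_max_right _ _
  have hMpos : (0:ℝ) < M := by linarith
  have hMbd : ∀ t ∈ Icc (-l) l, |deriv (deriv U) t| ≤ M := by
    intro t ht
    exact le_trans (hM0 t ht) (le_max_left _ _)
  have hmid : -l + δ ≤ 0 := by linarith
  obtain ⟨x₀, hx₀mem, hx₀min⟩ := isCompact_Icc.exists_isMinOn (s := Icc (-l+δ) 0)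
    ⟨-l+δ, left_mem_Icc.mpr hmid⟩ hc0.continuousOn
  set m₀ := U x₀ with hm₀def
  have hm₀ : 0 < m₀ := hUpos x₀ ⟨by linarith [hx₀mem.1], by linarith [hx₀mem.2]⟩
  -- Pointwise bounds on [-l, 0]
  have step1 : ∀ x ∈ Icc (-l) (0:ℝ), |deriv U x| ≤ M * (x + l) := by
    intro x hx
    rw [hU'eq x]
    have hb : ∀ t ∈ Set.uIoc (-l) x, ‖deriv (deriv U) t‖ ≤ M := by
      intro t ht
      rw [Set.uIoc_of_le hx.1] at ht
      exact hMbd t ⟨le_of_lt ht.1, by linarith [ht.2, hx.2]⟩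
    have h := intervalIntegral.norm_integral_le_of_norm_le_const hb
    rw [Real.norm_eq_abs] at h
    have : |x - (-l)| = x + l := by
      rw [abs_of_nonneg (by linarith [hx.1])]; ring
    rw [this] at h
    exact h
  have hlin_int : ∀ c : ℝ, ∀ a b : ℝ, (∫ t in a..b, c * (t + l)) = c/2*(b+l)^2 - c/2*(a+l)^2 := by
    intro c a b
    have hder : ∀ t ∈ Set.uIcc a b, HasDerivAt (fun t => c/2*(t+l)^2) (c*(t+l)) t := by
      intro t _
      have h := (((hasDerivAt_id t).add_const l).pow 2).const_mul (c/2)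
      refine h.congr_deriv ?_
      try simp only [id_eq]
      push_cast
      ring
    have hcont : Continuous (fun t : ℝ => c * (t + l)) :=
      continuous_const.mul (continuous_id.add continuous_const)
    rw [intervalIntegral.integral_eq_sub_of_hasDerivAt hder (hcont.intervalIntegrable _ _)]
  have step2 : ∀ x ∈ Icc (-l) (0:ℝ), U x ≤ M/2 * (x+l)^2 := by
    intro x hx
    rw [hUeq x]
    have hpt : ∀ t ∈ Icc (-l) x, deriv U t ≤ M * (t + l) := by
      intro t ht
      have := step1 t ⟨ht.1, le_trans ht.2 hx.2⟩
      exact le_trans (le_abs_self _) this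
    have hmono := intervalIntegral.integral_mono_on (μ := MeasureTheory.volume) (g := fun t => M * (t + l)) hx.1 (hc1.intervalIntegrable _ _)
      ((continuous_const.mul (continuous_id.add continuous_const) :
        Continuous (fun t : ℝ => M * (t + l))).intervalIntegrable _ _) hpt
    have := hlin_int M (-l) x
    rw [this] at hmono
    have : M/2*(-l+l)^2 = 0 := by ring_nf
    calc (∫ t in (-l)..x, deriv U t) ≤ M/2*(x+l)^2 - M/2*(-l+l)^2 := hmono
      _ = M/2*(x+l)^2 := by ring_nf
  have step3 : ∀ t ∈ Icc (-l) (-l+δ), A/2 * (t+l) ≤ deriv U t := by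
    intro t ht
    rw [hU'eq t]
    have hpt : ∀ s ∈ Icc (-l) t, (A/2 : ℝ) ≤ deriv (deriv U) s := by
      intro s hs
      exact hδlt s ⟨hs.1, le_trans hs.2 ht.2⟩
    have hmono := intervalIntegral.integral_mono_on (μ := MeasureTheory.volume) ht.1
      (intervalIntegrable_const)
      (hc2.intervalIntegrable _ _) hpt
    rw [intervalIntegral.integral_const] at hmono
    calc A/2 * (t+l) = (t - (-l)) • (A/2) := by simp [smul_eq_mul]; ring
      _ ≤ _ := hmono
  have step4 : ∀ x ∈ Icc (-l) (-l+δ), A/4 * (x+l)^2 ≤ U x := by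
    intro x hx
    rw [hUeq x]
    have hpt : ∀ t ∈ Icc (-l) x, A/2 * (t + l) ≤ deriv U t := by
      intro t ht
      exact step3 t ⟨ht.1, le_trans ht.2 hx.2⟩
    have hmono := intervalIntegral.integral_mono_on (μ := MeasureTheory.volume) (f := fun t => A/2 * (t + l)) hx.1
      ((continuous_const.mul (continuous_id.add continuous_const) :
        Continuous (fun t : ℝ => A/2 * (t + l))).intervalIntegrable _ _)
      (hc1.intervalIntegrable _ _) hpt
    have := hlin_int (A/2) (-l) x
    rw [this] at hmono
    calc A/4 * (x+l)^2 = (A/2)/2*(x+l)^2 - (A/2)/2*(-l+l)^2 := by ring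
      _ ≤ _ := hmono
  -- Constants for the bounds
  set c1 : ℝ := min (A/(16*l^2)) (m₀/l^4) with hc1def
  set C1 : ℝ := M/(2*l^2) with hC1def
  set C2 : ℝ := M/l with hC2def
  have hc1pos : 0 < c1 := lt_min (by positivity) (by positivity)
  have hC1pos : 0 < C1 := by positivity
  have hC2pos : 0 < C2 := by positivity
  -- U bounds on the negative side
  have hUlow_neg : ∀ x ∈ Ioc (-l) (0:ℝ), c1 * (l^2-x^2)^2 ≤ U x := by
    intro x hx
    have hxl : 0 < x + l := by linarith [hx.1]
    have hxu : x ≤ 0 := hx.2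
    rcases le_or_gt x (-l + δ) with h | h
    · have h4 := step4 x ⟨le_of_lt hx.1, h⟩
      have hkey : (l^2 - x^2)^2 ≤ 4*l^2*(x+l)^2 := by nlinarith [mul_nonneg (pow_nonneg hxl.le 3) (show (0:ℝ) ≤ 3*l - x by linarith)]
      have hc1le : c1 ≤ A/(16*l^2) := min_le_left _ _
      have e1 : A/(16*l^2) * (4*l^2*(x+l)^2) = A/4 * (x+l)^2 := by field_simp; ring
      calc c1 * (l^2-x^2)^2 ≤ A/(16*l^2) * (l^2-x^2)^2 := by nlinarith [sq_nonneg (l^2-x^2)]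
        _ ≤ A/(16*l^2) * (4*l^2*(x+l)^2) := by
            apply mul_le_mul_of_nonneg_left hkey (by positivity)
        _ = A/4 * (x+l)^2 := e1
        _ ≤ U x := h4
    · have h4 : m₀ ≤ U x := hx₀min ⟨le_of_lt h, hx.2⟩
      have hc1le : c1 ≤ m₀/l^4 := min_le_right _ _
      have hx2 : (0:ℝ) ≤ l^2 - x^2 := by nlinarith [mul_pos (show (0:ℝ) < l - x by linarith) hxl]
      have hkey : (l^2-x^2)^2 ≤ l^4 := by nlinarith [sq_nonneg x, mul_nonneg (sq_nonneg x) hx2, mul_nonneg (sq_nonneg x) (sq_nonneg l)]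
      have e1 : m₀/l^4 * l^4 = m₀ := by field_simp
      calc c1 * (l^2-x^2)^2 ≤ m₀/l^4 * (l^2-x^2)^2 := by nlinarith [sq_nonneg (l^2-x^2)]
        _ ≤ m₀/l^4 * l^4 := by apply mul_le_mul_of_nonneg_left hkey (by positivity)
        _ = m₀ := e1
        _ ≤ U x := h4
  have hUup_neg : ∀ x ∈ Ioc (-l) (0:ℝ), U x ≤ C1 * (l^2-x^2)^2 := by
    intro x hx
    have hxl : 0 < x + l := by linarith [hx.1]
    have hxu : x ≤ 0 := hx.2
    have h2 := step2 x ⟨le_of_lt hx.1, hx.2⟩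
    have hkey : l^2*(x+l)^2 ≤ (l^2-x^2)^2 := by nlinarith [mul_nonneg (mul_nonneg (sq_nonneg (x+l)) (show (0:ℝ) ≤ -x by linarith)) (show (0:ℝ) ≤ 2*l - x by linarith)]
    have e1 : C1 * (l^2 * (x+l)^2) = M/2 * (x+l)^2 := by rw [hC1def]; field_simp
    calc U x ≤ M/2 * (x+l)^2 := h2
      _ = C1 * (l^2*(x+l)^2) := e1.symm
      _ ≤ C1 * (l^2-x^2)^2 := by apply mul_le_mul_of_nonneg_left hkey (le_of_lt hC1pos)
  have hU'_neg : ∀ x ∈ Ioc (-l) (0:ℝ), |deriv U x| ≤ C2 * (l^2-x^2) := by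
    intro x hx
    have hxl : 0 < x + l := by linarith [hx.1]
    have hxu : x ≤ 0 := hx.2
    have h1 := step1 x ⟨le_of_lt hx.1, hx.2⟩
    have hkey : l*(x+l) ≤ l^2-x^2 := by nlinarith [mul_nonneg hxl.le (show (0:ℝ) ≤ -x by linarith)]
    have e1 : C2 * (l*(x+l)) = M * (x+l) := by rw [hC2def]; field_simp
    calc |deriv U x| ≤ M * (x+l) := h1
      _ = C2 * (l*(x+l)) := e1.symm
      _ ≤ C2 * (l^2-x^2) := by apply mul_le_mul_of_nonneg_left hkey (le_of_lt hC2pos)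
  -- Global bounds by evenness
  have hUlow : ∀ x ∈ Ioo (-l) l, c1 * (l^2-x^2)^2 ≤ U x := by
    intro x hx
    rcases le_or_gt x 0 with h | h
    · exact hUlow_neg x ⟨hx.1, h⟩
    · have hh := hUlow_neg (-x) ⟨by linarith [hx.2], by linarith⟩
      rw [hUeven x, neg_sq] at hh
      exact hh
  have hUup : ∀ x ∈ Ioo (-l) l, U x ≤ C1 * (l^2-x^2)^2 := by
    intro x hx
    rcases le_or_gt x 0 with h | h
    · exact hUup_neg x ⟨hx.1, h⟩
    · have hh := hUup_neg (-x) ⟨by linarith [hx.2], by linarith⟩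
      rw [hUeven x, neg_sq] at hh
      exact hh
  have hU'bd : ∀ x ∈ Ioo (-l) l, |deriv U x| ≤ C2 * (l^2-x^2) := by
    intro x hx
    rcases le_or_gt x 0 with h | h
    · exact hU'_neg x ⟨hx.1, h⟩
    · have hh := hU'_neg (-x) ⟨by linarith [hx.2], by linarith⟩
      rw [hodd x, abs_neg, neg_sq] at hh
      exact hh
  -- Phi facts
  have hPhiD : ∀ x : ℝ, HasDerivAt (Phi U)
      (-4*U x*deriv (deriv (deriv U)) x + 4*(U x)^3*deriv U x) x := by
    intro x
    have e : Phi U = fun y => 2*(deriv U y)^2 - 4*(U y * deriv (deriv U) y) + (U y)^4 := by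
      funext y
      simp only [Phi, iter2_eq]
      ring
    rw [e]
    have h1 : HasDerivAt U (deriv U x) x := (hd0 x).hasDerivAt
    have h2 : HasDerivAt (deriv U) (deriv (deriv U) x) x := (hd1 x).hasDerivAt
    have h3 : HasDerivAt (deriv (deriv U)) (deriv (deriv (deriv U)) x) x := (hd2 x).hasDerivAt
    have hh := (((h2.pow 2).const_mul (2:ℝ)).sub (((h1.mul h3)).const_mul (4:ℝ))).add (h1.pow 4)
    refine hh.congr_deriv ?_
    push_cast
    ring
  have hPhi' : ∀ x ∈ Ioo (-l) l, deriv (Phi U) x = -(4/5)*(x * U x) := by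
    intro x hx
    rw [(hPhiD x).deriv]
    have hO := hODE x hx
    rw [iter3_eq] at hO
    rw [hO]
    ring
  have hPhiml : Phi U (-l) = 0 := by
    simp [Phi, hUml, hU'ml]
  have hgcont : Continuous (fun t => -4*U t*deriv (deriv (deriv U)) t + 4*(U t)^3*deriv U t) :=
    ((continuous_const.mul hc0).mul hc3).add ((continuous_const.mul (hc0.pow 3)).mul hc1)
  have hPhiInt : ∀ x ∈ Ioo (-l) l, Phi U x = ∫ t in (-l)..x, -(4/5)*(t * U t) := by
    intro x hx
    have hFTC := intervalIntegral.integral_eq_sub_of_hasDerivAt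
      (f := Phi U)
      (f' := fun t => -4*U t*deriv (deriv (deriv U)) t + 4*(U t)^3*deriv U t)
      (a := -l) (b := x) (fun t _ => hPhiD t) (hgcont.intervalIntegrable _ _)
    rw [hPhiml, sub_zero] at hFTC
    rw [← hFTC]
    apply intervalIntegral.integral_congr
    intro t ht
    rw [Set.uIcc_of_le (by linarith [hx.1])] at ht
    rcases eq_or_lt_of_le ht.1 with h | h
    · rw [← h]
      show -4*U (-l)*deriv (deriv (deriv U)) (-l) + 4*(U (-l))^3*deriv U (-l)
        = -(4/5)*((-l) * U (-l))
      rw [hUml]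
      ring
    · have hO := hODE t ⟨h, lt_of_le_of_lt ht.2 hx.2⟩
      rw [iter3_eq] at hO
      show -4*U t*deriv (deriv (deriv U)) t + 4*(U t)^3*deriv U t = -(4/5)*(t * U t)
      rw [hO]
      ring
  have hcube_int : ∀ c : ℝ, ∀ x : ℝ, (∫ t in (-l)..x, -(4/5)*(t * (c*(l^2-t^2)^2)))
      = 2*c/15 * (l^2-x^2)^3 := by
    intro c x
    have hder : ∀ t ∈ Set.uIcc (-l) x,
        HasDerivAt (fun t => 2*c/15*(l^2-t^2)^3) (-(4/5)*(t * (c*(l^2-t^2)^2))) t := by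
      intro t _
      have h := (((hasDerivAt_pow 2 t).const_sub (l^2)).pow 3).const_mul (2*c/15)
      refine h.congr_deriv ?_
      try simp only [id_eq]
      push_cast
      ring
    have hcont : Continuous (fun t : ℝ => -(4/5)*(t * (c*(l^2-t^2)^2))) :=
      continuous_const.mul (continuous_id.mul (continuous_const.mul
        ((continuous_const.sub (continuous_pow 2)).pow 2)))
    rw [intervalIntegral.integral_eq_sub_of_hasDerivAt hder (hcont.intervalIntegrable _ _)]
    have : l^2 - (-l)^2 = 0 := by ring
    rw [this]
    ring
  have hPhiLow_neg : ∀ x ∈ Ioc (-l) (0:ℝ), 2*c1/15 * (l^2-x^2)^3 ≤ Phi U x := by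
    intro x hx
    have hxIoo : x ∈ Ioo (-l) l := ⟨hx.1, lt_of_le_of_lt hx.2 hl⟩
    rw [hPhiInt x hxIoo, ← hcube_int c1 x]
    apply intervalIntegral.integral_mono_on (f := fun t => -(4/5)*(t * (c1*(l^2-t^2)^2))) (g := fun t => -(4/5)*(t * U t)) (by linarith [hx.1])
      ((continuous_const.mul (continuous_id.mul (continuous_const.mul
        ((continuous_const.sub (continuous_pow 2)).pow 2))) :
        Continuous (fun t : ℝ => -(4/5)*(t * (c1*(l^2-t^2)^2)))).intervalIntegrable _ _)
      ((continuous_const.mul (continuous_id.mul hc0) :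
        Continuous (fun t : ℝ => -(4/5)*(t * U t))).intervalIntegrable _ _)
    intro t ht
    rcases eq_or_lt_of_le ht.1 with h | h
    · rw [← h]
      have : l^2 - (-l)^2 = 0 := by ring
      rw [this, hUml]
      norm_num
    · have htneg : t ≤ 0 := le_trans ht.2 hx.2
      have hU := hUlow_neg t ⟨h, htneg⟩
      have hmt : 0 ≤ -t := by linarith
      nlinarith
  have hPhiUp_neg : ∀ x ∈ Ioc (-l) (0:ℝ), Phi U x ≤ 2*C1/15 * (l^2-x^2)^3 := by
    intro x hx
    have hxIoo : x ∈ Ioo (-l) l := ⟨hx.1, lt_of_le_of_lt hx.2 hl⟩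
    rw [hPhiInt x hxIoo, ← hcube_int C1 x]
    apply intervalIntegral.integral_mono_on (g := fun t => -(4/5)*(t * (C1*(l^2-t^2)^2))) (f := fun t => -(4/5)*(t * U t)) (by linarith [hx.1])
      ((continuous_const.mul (continuous_id.mul hc0) :
        Continuous (fun t : ℝ => -(4/5)*(t * U t))).intervalIntegrable _ _)
      ((continuous_const.mul (continuous_id.mul (continuous_const.mul
        ((continuous_const.sub (continuous_pow 2)).pow 2))) :
        Continuous (fun t : ℝ => -(4/5)*(t * (C1*(l^2-t^2)^2)))).intervalIntegrable _ _)
    intro t ht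
    rcases eq_or_lt_of_le ht.1 with h | h
    · rw [← h]
      have : l^2 - (-l)^2 = 0 := by ring
      rw [this, hUml]
      norm_num
    · have htneg : t ≤ 0 := le_trans ht.2 hx.2
      have hU := hUup_neg t ⟨h, htneg⟩
      have hmt : 0 ≤ -t := by linarith
      nlinarith
  have hPhieven : ∀ x : ℝ, Phi U (-x) = Phi U x := by
    intro x
    simp only [Phi, iter2_eq]
    rw [hodd x, heven2 x, hUeven x]
    ring
  have hPhiLow : ∀ x ∈ Ioo (-l) l, 2*c1/15 * (l^2-x^2)^3 ≤ Phi U x := by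
    intro x hx
    rcases le_or_gt x 0 with h | h
    · exact hPhiLow_neg x ⟨hx.1, h⟩
    · have hh := hPhiLow_neg (-x) ⟨by linarith [hx.2], by linarith⟩
      rw [hPhieven x, neg_sq] at hh
      exact hh
  have hPhiUp : ∀ x ∈ Ioo (-l) l, Phi U x ≤ 2*C1/15 * (l^2-x^2)^3 := by
    intro x hx
    rcases le_or_gt x 0 with h | h
    · exact hPhiUp_neg x ⟨hx.1, h⟩
    · have hh := hPhiUp_neg (-x) ⟨by linarith [hx.2], by linarith⟩
      rw [hPhieven x, neg_sq] at hh
      exact hh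
  -- |Phi'| bound
  have hPhi'bd : ∀ x ∈ Ioo (-l) l, |deriv (Phi U) x| ≤ (4/5*l*C1) * (l^2-x^2)^2 := by
    intro x hx
    rw [hPhi' x hx]
    have habsx : |x| ≤ l := le_of_lt (abs_lt.mpr ⟨hx.1, hx.2⟩)
    have hU0 : 0 ≤ U x := le_of_lt (hUpos x hx)
    have hUu := hUup x hx
    have e1 : |-(4/5)*(x * U x)| = 4/5 * (|x| * U x) := by
      rw [abs_mul, abs_mul, abs_of_nonneg hU0]
      norm_num
    rw [e1]
    have h2 : |x| * U x ≤ l * (C1*(l^2-x^2)^2) :=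
      mul_le_mul habsx hUu hU0 (le_of_lt hl)
    nlinarith
  -- |Phi''| bound
  have hPhi''bd : ∀ x ∈ Ioo (-l) l,
      |iteratedDeriv 2 (Phi U) x| ≤ (4/5*(C1*l^2 + l*C2)) * (l^2-x^2) := by
    intro x hx
    have hloc : deriv (Phi U) =ᶠ[nhds x] fun t => -(4/5)*(t * U t) :=
      Filter.eventuallyEq_of_mem (isOpen_Ioo.mem_nhds hx) (fun t ht => hPhi' t ht)
    have h2 : iteratedDeriv 2 (Phi U) x = deriv (deriv (Phi U)) x := by rw [iter2_eq]
    have hg' : HasDerivAt (fun t => -(4/5)*(t * U t)) (-(4/5)*(U x + x * deriv U x)) x := by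
      have h := ((hasDerivAt_id x).mul (hd0 x).hasDerivAt).const_mul (-(4/5):ℝ)
      refine h.congr_deriv ?_
      try simp only [id_eq]
      push_cast
      ring
    rw [h2, hloc.deriv_eq, hg'.deriv]
    have habsx : |x| ≤ l := le_of_lt (abs_lt.mpr ⟨hx.1, hx.2⟩)
    have hU0 : 0 ≤ U x := le_of_lt (hUpos x hx)
    have hx2 : 0 ≤ l^2 - x^2 := by nlinarith [abs_nonneg x, sq_abs x]
    have hx2' : l^2 - x^2 ≤ l^2 := by nlinarith [sq_nonneg x]
    have k1 : |U x| ≤ (C1*l^2)*(l^2-x^2) := by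
      rw [abs_of_nonneg hU0]
      have h5 := hUup x hx
      nlinarith [mul_le_mul_of_nonneg_left hx2' (mul_nonneg hC1pos.le hx2)]
    have k2 : |x * deriv U x| ≤ (l*C2)*(l^2-x^2) := by
      rw [abs_mul]
      have hub := hU'bd x hx
      calc |x| * |deriv U x| ≤ l * (C2*(l^2-x^2)) :=
            mul_le_mul habsx hub (abs_nonneg _) (le_of_lt hl)
        _ = (l*C2)*(l^2-x^2) := by ring
    have k3 : |U x + x * deriv U x| ≤ (C1*l^2 + l*C2)*(l^2-x^2) := by
      calc |U x + x * deriv U x| ≤ |U x| + |x * deriv U x| := abs_add_le _ _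
        _ ≤ (C1*l^2)*(l^2-x^2) + (l*C2)*(l^2-x^2) := add_le_add k1 k2
        _ = (C1*l^2 + l*C2)*(l^2-x^2) := by ring
    have e1 : |-(4/5)*(U x + x * deriv U x)| = 4/5 * |U x + x * deriv U x| := by
      rw [abs_mul]
      norm_num
    rw [e1]
    nlinarith
  -- Assemble
  set Cb : ℝ := C1 + C2 + 2*C1/15 + 4/5*l*C1 + 4/5*(C1*l^2 + l*C2) + 2*c1/15 with hCbdef
  have p1 : 0 < 4/5*l*C1 := by positivity
  have p2 : 0 < 4/5*(C1*l^2 + l*C2) := by positivity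
  have p3 : 0 < 2*C1/15 := by positivity
  have p4 : 0 < 2*c1/15 := by positivity
  have hC1le : C1 ≤ Cb := by rw [hCbdef]; linarith
  have hC2le : C2 ≤ Cb := by rw [hCbdef]; linarith
  have hC1'le : 2*C1/15 ≤ Cb := by rw [hCbdef]; linarith
  have hP'le : 4/5*l*C1 ≤ Cb := by rw [hCbdef]; linarith
  have hP''le : 4/5*(C1*l^2 + l*C2) ≤ Cb := by rw [hCbdef]; linarith
  have hcle : 2*c1/15 ≤ Cb := by rw [hCbdef]; linarith
  refine ⟨2*c1/15, Cb, p4, hcle, ?_⟩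
  intro x hx
  have hx2 : 0 ≤ l^2 - x^2 := by
    nlinarith [mul_pos (show (0:ℝ) < l - x by linarith [hx.2]) (show (0:ℝ) < l + x by linarith [hx.1])]
  have hx2sq : 0 ≤ (l^2 - x^2)^2 := sq_nonneg _
  have hx2cube : 0 ≤ (l^2 - x^2)^3 := by positivity
  refine ⟨?_, ?_, ?_, ?_, ?_, ?_, ?_⟩
  · calc 2*c1/15 * (l^2-x^2)^2 ≤ c1 * (l^2-x^2)^2 :=
        mul_le_mul_of_nonneg_right (by linarith) hx2sq
      _ ≤ U x := hUlow x hx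
  · calc U x ≤ C1 * (l^2-x^2)^2 := hUup x hx
      _ ≤ Cb * (l^2-x^2)^2 := mul_le_mul_of_nonneg_right hC1le hx2sq
  · exact hPhiLow x hx
  · calc Phi U x ≤ 2*C1/15 * (l^2-x^2)^3 := hPhiUp x hx
      _ ≤ Cb * (l^2-x^2)^3 := mul_le_mul_of_nonneg_right hC1'le hx2cube
  · calc |deriv U x| ≤ C2 * (l^2-x^2) := hU'bd x hx
      _ ≤ Cb * (l^2-x^2) := mul_le_mul_of_nonneg_right hC2le hx2
  · calc |deriv (Phi U) x| ≤ (4/5*l*C1) * (l^2-x^2)^2 := hPhi'bd x hx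
      _ ≤ Cb * (l^2-x^2)^2 := mul_le_mul_of_nonneg_right hP'le hx2sq
  · calc |iteratedDeriv 2 (Phi U) x| ≤ (4/5*(C1*l^2 + l*C2)) * (l^2-x^2) := hPhi''bd x hx
      _ ≤ Cb * (l^2-x^2) := mul_le_mul_of_nonneg_right hP''le hx2
end

section
/- Let ℓ > 0, β > -1, and γ ∈ ℝ. Then there exists a constant C = C(β,γ,ℓ) < ∞ such that for all V ∈ C^∞([-ℓ,ℓ]): ∫_{-ℓ}^{ℓ} (ℓ²-x²)^β V(x)² dx ≤ C ∫_{-ℓ}^{ℓ} ( (ℓ²-x²)^γ V(x)² + (ℓ²-x²)^{β+2} V'(x)² ) dx. -/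
open MeasureTheory Set

set_option linter.unusedVariables false

set_option maxHeartbeats 1000000

lemma auxAmgm {ε : ℝ} (hε : 0 < ε) (p q : ℝ) : 2*p*q ≤ ε*p^2 + ε⁻¹*q^2 := by
  have h1 : ε * (ε*p^2 + ε⁻¹*q^2 - 2*p*q) = (ε*p - q)^2 := by
    field_simp; ring
  nlinarith [sq_nonneg (ε*p - q), hε]

lemma auxWpos {l x : ℝ} (hx : x ∈ Ioo (-l) l) : 0 < l^2 - x^2 := by
  obtain ⟨h1, h2⟩ := hx; nlinarith

lemma auxContOn (l c : ℝ) : ContinuousOn (fun x : ℝ => (l^2 - x^2) ^ c) (Ioo (-l) l) := by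
  intro x hx
  have hw : l^2 - x^2 ≠ 0 := ne_of_gt (auxWpos hx)
  exact (((continuous_const.sub (continuous_pow 2)).continuousAt).rpow_const
    (Or.inl hw)).continuousWithinAt

lemma auxCont (l c : ℝ) (hc : 0 ≤ c) : Continuous (fun x : ℝ => (l^2 - x^2) ^ c) := by
  rw [continuous_iff_continuousAt]
  intro x
  exact ((continuous_const.sub (continuous_pow 2)).continuousAt).rpow_const (Or.inr hc)

lemma auxIntegrable {l β : ℝ} (hl : 0 < l) (hβ : -1 < β) :
    IntegrableOn (fun x : ℝ => (l^2 - x^2) ^ β) (Ioo (-l) l) volume := by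
  set K := max (l ^ β) ((2*l) ^ β) with hK
  have hKb : ∀ y : ℝ, l ≤ y → y ≤ 2*l → y ^ β ≤ K := by
    intro y h1 h2
    rcases le_or_gt 0 β with hb | hb
    · exact le_trans (Real.rpow_le_rpow (by linarith) h2 hb) (le_max_right _ _)
    · exact le_trans (Real.rpow_le_rpow_of_nonpos hl h1 hb.le) (le_max_left _ _)
  have hright : IntegrableOn (fun x : ℝ => (l^2 - x^2) ^ β) (Ioo 0 l) volume := by
    have hint : IntegrableOn (fun x : ℝ => K * (l - x) ^ β) (Ioo 0 l) volume := by
      have h1 : IntervalIntegrable (fun x : ℝ => x ^ β) volume 0 l :=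
        intervalIntegral.intervalIntegrable_rpow' hβ
      have h2 := (h1.comp_sub_left l).symm
      simp only [sub_zero, sub_self] at h2
      exact ((intervalIntegrable_iff_integrableOn_Ioo_of_le hl.le).mp h2).const_mul K
    apply hint.mono' (f := fun x : ℝ => (l^2 - x^2) ^ β)
    · exact ((auxContOn l β).mono (fun x hx => by
        constructor <;> [linarith [hx.1]; exact hx.2])).aestronglyMeasurable measurableSet_Ioo
    · filter_upwards [ae_restrict_mem measurableSet_Ioo] with x hx
      have h1 : (0:ℝ) < l - x := by linarith [hx.2]
      have h2 : (0:ℝ) < l + x := by linarith [hx.1]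
      have he : l^2 - x^2 = (l - x) * (l + x) := by ring
      rw [Real.norm_eq_abs, abs_of_nonneg (Real.rpow_nonneg (by nlinarith) _), he,
        Real.mul_rpow h1.le h2.le, mul_comm K _]
      exact mul_le_mul_of_nonneg_left (hKb _ (by linarith [hx.1]) (by linarith [hx.2]))
        (Real.rpow_nonneg h1.le _)
  have hleft : IntegrableOn (fun x : ℝ => (l^2 - x^2) ^ β) (Ioc (-l) 0) volume := by
    have hint : IntegrableOn (fun x : ℝ => K * (l + x) ^ β) (Ioc (-l) 0) volume := by
      have h1 : IntervalIntegrable (fun x : ℝ => x ^ β) volume 0 l :=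
        intervalIntegral.intervalIntegrable_rpow' hβ
      have h3 : IntervalIntegrable (fun x : ℝ => (l + x) ^ β) volume (-l) 0 := by
        have := h1.comp_add_right l
        simpa [zero_sub, sub_self, add_comm] using this
      exact ((intervalIntegrable_iff_integrableOn_Ioc_of_le (by linarith)).mp h3).const_mul K
    apply hint.mono' (f := fun x : ℝ => (l^2 - x^2) ^ β)
    · have hco : ContinuousOn (fun x : ℝ => (l^2 - x^2) ^ β) (Ioc (-l) 0) := by
        intro x hx
        have hw : l^2 - x^2 ≠ 0 := by nlinarith [hx.1, hx.2]
        exact (((continuous_const.sub (continuous_pow 2)).continuousAt).rpow_const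
          (Or.inl hw)).continuousWithinAt
      exact hco.aestronglyMeasurable measurableSet_Ioc
    · filter_upwards [ae_restrict_mem measurableSet_Ioc] with x hx
      have h1 : (0:ℝ) < l - x := by linarith [hx.2]
      have h2 : (0:ℝ) < l + x := by linarith [hx.1]
      have he : l^2 - x^2 = (l - x) * (l + x) := by ring
      rw [Real.norm_eq_abs, abs_of_nonneg (Real.rpow_nonneg (by nlinarith) _), he,
        Real.mul_rpow h1.le h2.le]
      exact mul_le_mul_of_nonneg_right (hKb _ (by linarith [hx.2]) (by linarith [hx.1]))
        (Real.rpow_nonneg h2.le _)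
  have hu : Ioc (-l) 0 ∪ Ioo 0 l = Ioo (-l) l := Ioc_union_Ioo_eq_Ioo (by linarith) hl
  rw [← hu]
  exact hleft.union hright

lemma auxIntegrableMul {l β : ℝ} (hl : 0 < l) (hβ : -1 < β) (G : ℝ → ℝ) (hG : Continuous G) :
    IntegrableOn (fun x : ℝ => G x * (l^2 - x^2) ^ β) (Ioo (-l) l) volume := by
  obtain ⟨M, hM⟩ := (isCompact_Icc (a := -l) (b := l)).exists_bound_of_continuousOn hG.continuousOn
  apply ((auxIntegrable hl hβ).const_mul M).mono'
    (f := fun x : ℝ => G x * (l^2 - x^2) ^ β)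
  · exact (hG.continuousOn.mul (auxContOn l β)).aestronglyMeasurable measurableSet_Ioo
  · filter_upwards [ae_restrict_mem measurableSet_Ioo] with x hx
    have hw : (0:ℝ) ≤ l^2 - x^2 := (auxWpos hx).le
    rw [norm_mul, Real.norm_eq_abs ((l^2-x^2)^β), abs_of_nonneg (Real.rpow_nonneg hw _)]
    exact mul_le_mul_of_nonneg_right (hM x (Ioo_subset_Icc_self hx)) (Real.rpow_nonneg hw _)

lemma auxContIntS {l : ℝ} (F : ℝ → ℝ) (hF : Continuous F) :
    IntegrableOn F (Ioo (-l) l) volume :=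
  (hF.integrableOn_Icc).mono_set Ioo_subset_Icc_self

theorem stmt5 (l : ℝ) (hl : 0 < l) (β γ : ℝ) (hβ : -1 < β) :
    ∃ C : ℝ, 0 < C ∧ ∀ V : ℝ → ℝ, ContDiff ℝ (⊤ : ℕ∞) V →
      (∫⁻ x in Set.Ioo (-l) l, ENNReal.ofReal ((l^2 - x^2) ^ β * (V x)^2))
        ≤ ENNReal.ofReal C *
            ∫⁻ x in Set.Ioo (-l) l,
              ENNReal.ofReal ((l^2 - x^2) ^ γ * (V x)^2 + (l^2 - x^2) ^ (β + 2) * (deriv V x)^2) := by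
  have hβ1 : (0:ℝ) < β + 1 := by linarith
  have hβ2 : (0:ℝ) ≤ β + 2 := by linarith
  have hl2 : (0:ℝ) < l^2 := by positivity
  obtain ⟨A, hA0, hAl, habs⟩ : ∃ A : ℝ, 0 < A ∧ A < l^2 ∧ l^2 - A ≤ (β+1)*A/2 := by
    refine ⟨l^2*(β+5)/(2*β+6), div_pos (mul_pos hl2 (by linarith)) (by linarith), ?_, ?_⟩
    · rw [div_lt_iff₀ (by linarith)]; nlinarith
    · have hAe : l^2*(β+5)/(2*β+6) * (2*β+6) = l^2*(β+5) :=
        div_mul_cancel₀ _ (by linarith)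
      rw [le_div_iff₀ (by norm_num : (0:ℝ) < 2)]
      nlinarith [mul_nonneg hl2.le hβ1.le]
  have hδ : (0:ℝ) < l^2 - A := by linarith
  set K₁ : ℝ := max ((l^2-A) ^ β) ((l^2) ^ β) with hK₁def
  set K₂ : ℝ := min ((l^2-A) ^ γ) ((l^2) ^ γ) with hK₂def
  have hK₁0 : 0 < K₁ := lt_max_of_lt_left (Real.rpow_pos_of_pos hδ _)
  have hK₂0 : 0 < K₂ := lt_min (Real.rpow_pos_of_pos hδ _) (Real.rpow_pos_of_pos hl2 _)
  have hK₁ : ∀ w : ℝ, l^2 - A ≤ w → w ≤ l^2 → w ^ β ≤ K₁ := by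
    intro w h1 h2
    rcases le_or_gt 0 β with hb | hb
    · exact le_trans (Real.rpow_le_rpow (by linarith) h2 hb) (le_max_right _ _)
    · exact le_trans (Real.rpow_le_rpow_of_nonpos hδ h1 hb.le) (le_max_left _ _)
  have hK₂ : ∀ w : ℝ, l^2 - A ≤ w → w ≤ l^2 → K₂ ≤ w ^ γ := by
    intro w h1 h2
    rcases le_or_gt 0 γ with hb | hb
    · exact le_trans (min_le_left _ _) (Real.rpow_le_rpow hδ.le h1 hb)
    · exact le_trans (min_le_right _ _) (Real.rpow_le_rpow_of_nonpos (by linarith) h2 hb.le)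
  set C₁ : ℝ := ((β+1)*A + l^2) * K₁ / K₂ with hC₁def
  have hC₁0 : 0 < C₁ := by
    apply div_pos _ hK₂0
    apply mul_pos _ hK₁0
    nlinarith
  set ε : ℝ := (β+1)*A/(2*l^2) with hεdef
  have hε : 0 < ε := by
    apply div_pos (by nlinarith) (by linarith)
  have hεl : ε * l^2 = (β+1)*A/2 := by
    rw [hεdef]; field_simp
  set M : ℝ := max ε⁻¹ C₁ with hMdef
  have hM0 : 0 < M := lt_max_of_lt_right hC₁0
  set C : ℝ := (2/((β+1)*A)) * M with hCdef
  have hC : 0 < C := by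
    apply mul_pos (div_pos (by norm_num) (by nlinarith)) hM0
  refine ⟨C, hC, ?_⟩
  intro V hV
  have hVc : Continuous V := hV.continuous
  have hV'c : Continuous (deriv V) := hV.continuous_deriv (by simp)
  -- Case split on whether the RHS lintegral is infinite
  by_cases hR : (∫⁻ x in Set.Ioo (-l) l,
      ENNReal.ofReal ((l^2 - x^2) ^ γ * (V x)^2 + (l^2 - x^2) ^ (β + 2) * (deriv V x)^2)) = ⊤
  · rw [hR, ENNReal.mul_top (ENNReal.ofReal_pos.mpr hC).ne']
    exact le_top
  -- Notation
  set S : Set ℝ := Ioo (-l) l with hSdef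
  -- Integrability facts
  have int_fβ : IntegrableOn (fun x : ℝ => (l^2 - x^2) ^ β * (V x)^2) S volume := by
    exact (auxIntegrableMul hl hβ (fun x => (V x)^2) (hVc.pow 2)).congr_fun
      (fun x _ => mul_comm _ _) measurableSet_Ioo
  have int_D : IntegrableOn (fun x : ℝ => (l^2 - x^2) ^ (β+2) * (deriv V x)^2) S volume :=
    auxContIntS _ ((auxCont l (β+2) hβ2).mul (hV'c.pow 2))
  have int_F2 : IntegrableOn
      (fun x : ℝ => 2*x*(l^2-x^2)^(β+1)*(V x)*(deriv V x)) S volume :=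
    auxContIntS _ ((((continuous_const.mul continuous_id).mul
      (auxCont l (β+1) (by linarith))).mul hVc).mul hV'c)
  have int_PV : IntegrableOn
      (fun x : ℝ => (2*(β+1)*x^2*(l^2-x^2)^β - (l^2-x^2)^(β+1)) * (V x)^2) S volume := by
    have h1 := auxIntegrableMul hl hβ (fun x => 2*(β+1)*x^2*(V x)^2)
      (((continuous_const.mul (continuous_pow 2))).mul (hVc.pow 2))
    have h2 : IntegrableOn (fun x : ℝ => -((l^2-x^2)^(β+1)*(V x)^2)) S volume :=
      (auxContIntS _ ((auxCont l (β+1) (by linarith)).mul (hVc.pow 2))).neg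
    have h12 : IntegrableOn (fun x : ℝ => (fun x : ℝ => 2*(β+1)*x^2*(V x)^2) x * (l^2-x^2)^β
        + -((l^2-x^2)^(β+1)*(V x)^2)) S volume := h1.add h2
    exact h12.congr_fun (fun x _ => by ring) measurableSet_Ioo
  -- FTC: the integral of the derivative vanishes
  have hftc : ∫ x in S, ((2*(β+1)*x^2*(l^2-x^2)^β - (l^2-x^2)^(β+1)) * (V x)^2
      - 2*x*(l^2-x^2)^(β+1)*(V x)*(deriv V x)) = 0 := by
    have hderiv : ∀ x ∈ Ioo (-l) l,
        HasDerivWithinAt (fun y : ℝ => -y * (l^2 - y^2)^(β+1) * (V y)^2)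
          ((2*(β+1)*x^2*(l^2-x^2)^β - (l^2-x^2)^(β+1)) * (V x)^2
            - 2*x*(l^2-x^2)^(β+1)*(V x)*(deriv V x)) (Ioi x) x := by
      intro x hx
      have hw : l^2 - x^2 ≠ 0 := ne_of_gt (auxWpos hx)
      have hb : HasDerivAt (fun y : ℝ => l^2 - y^2) (-(2*x)) x := by
        simpa using (hasDerivAt_pow 2 x).const_sub (l^2)
      have h2 := hb.rpow_const (p := β+1) (Or.inl hw)
      rw [show β+1-1 = β from by ring] at h2
      have hV1 : HasDerivAt V (deriv V x) x := (hV.differentiable (by simp) x).hasDerivAt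
      have hVsq : HasDerivAt (fun y : ℝ => (V y)^2) (2 * V x * deriv V x) x := by
        simpa using hV1.fun_pow 2
      have hx1 : HasDerivAt (fun y : ℝ => -y) (-1) x := (hasDerivAt_id x).neg
      have hfull := (hx1.fun_mul h2).fun_mul hVsq
      have : HasDerivAt (fun y : ℝ => -y * (l^2 - y^2)^(β+1) * (V y)^2)
          ((2*(β+1)*x^2*(l^2-x^2)^β - (l^2-x^2)^(β+1)) * (V x)^2
            - 2*x*(l^2-x^2)^(β+1)*(V x)*(deriv V x)) x := by
        exact hfull.congr_deriv (by ring)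
      exact this.hasDerivWithinAt
    have hcont : ContinuousOn (fun y : ℝ => -y * (l^2 - y^2)^(β+1) * (V y)^2) (Icc (-l) l) :=
      ((continuous_id.neg.mul (auxCont l (β+1) (by linarith))).mul (hVc.pow 2)).continuousOn
    have hii : IntervalIntegrable
        (fun x : ℝ => (2*(β+1)*x^2*(l^2-x^2)^β - (l^2-x^2)^(β+1)) * (V x)^2
          - 2*x*(l^2-x^2)^(β+1)*(V x)*(deriv V x)) volume (-l) l := by
      rw [intervalIntegrable_iff_integrableOn_Ioo_of_le (by linarith)]
      exact int_PV.sub int_F2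
    have h := intervalIntegral.integral_eq_sub_of_hasDeriv_right_of_le (by linarith : -l ≤ l)
      hcont hderiv hii
    rw [intervalIntegral.integral_of_le (by linarith : -l ≤ l),
      integral_Ioc_eq_integral_Ioo] at h
    simp only [neg_sq, sub_self, Real.zero_rpow (show β+1 ≠ 0 by linarith), mul_zero,
      zero_mul, neg_neg, sub_zero, neg_zero] at h
    simpa using h
  -- nonnegativity and integrability of gamma part
  have hγ_int : IntegrableOn (fun x : ℝ => (l^2 - x^2) ^ γ * (V x)^2) S volume := by
    have hgm : AEStronglyMeasurable
        (fun x : ℝ => (l^2 - x^2) ^ γ * (V x)^2 + (l^2 - x^2) ^ (β + 2) * (deriv V x)^2)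
        (volume.restrict S) :=
      (((auxContOn l γ).mul (hVc.pow 2).continuousOn).add
        (((auxCont l (β+2) hβ2).mul (hV'c.pow 2)).continuousOn)).aestronglyMeasurable
        measurableSet_Ioo
    have hg_nonneg : 0 ≤ᵐ[volume.restrict S]
        (fun x : ℝ => (l^2 - x^2) ^ γ * (V x)^2 + (l^2 - x^2) ^ (β + 2) * (deriv V x)^2) := by
      filter_upwards [ae_restrict_mem measurableSet_Ioo] with x hx
      have hw := (auxWpos hx).le
      exact add_nonneg (mul_nonneg (Real.rpow_nonneg hw _) (sq_nonneg _))
        (mul_nonneg (Real.rpow_nonneg hw _) (sq_nonneg _))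
    have hg_int : IntegrableOn
        (fun x : ℝ => (l^2 - x^2) ^ γ * (V x)^2 + (l^2 - x^2) ^ (β + 2) * (deriv V x)^2)
        S volume :=
      ⟨hgm, (hasFiniteIntegral_iff_ofReal hg_nonneg).2 (lt_top_iff_ne_top.2 hR)⟩
    apply hg_int.mono'
    · exact ((auxContOn l γ).mul (hVc.pow 2).continuousOn).aestronglyMeasurable measurableSet_Ioo
    · filter_upwards [ae_restrict_mem measurableSet_Ioo] with x hx
      have hw := (auxWpos hx).le
      rw [Real.norm_eq_abs,
        abs_of_nonneg (mul_nonneg (Real.rpow_nonneg hw _) (sq_nonneg _))]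
      nlinarith [mul_nonneg (Real.rpow_nonneg hw (β+2)) (sq_nonneg (deriv V x))]
  -- abbreviations for the three integrals
  set I : ℝ := ∫ x in S, (l^2 - x^2) ^ β * (V x)^2 with hIdef
  set Γι : ℝ := ∫ x in S, (l^2 - x^2) ^ γ * (V x)^2 with hΓdef
  set D : ℝ := ∫ x in S, (l^2 - x^2) ^ (β+2) * (deriv V x)^2 with hDdef
  have hΓ0 : 0 ≤ Γι := setIntegral_nonneg measurableSet_Ioo
    (fun x hx => mul_nonneg (Real.rpow_nonneg (auxWpos hx).le _) (sq_nonneg _))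
  have hD0 : 0 ≤ D := setIntegral_nonneg measurableSet_Ioo
    (fun x hx => mul_nonneg (Real.rpow_nonneg (auxWpos hx).le _) (sq_nonneg _))
  -- Step (i) : (β+1)*A*I ≤ ∫ P V² + C₁ Γ
  have hstep1 : (β+1)*A*I ≤
      (∫ x in S, (2*(β+1)*x^2*(l^2-x^2)^β - (l^2-x^2)^(β+1)) * (V x)^2) + C₁ * Γι := by
    have hmono : (∫ x in S, ((β+1)*A*((l^2 - x^2) ^ β * (V x)^2)))
        ≤ ∫ x in S, ((2*(β+1)*x^2*(l^2-x^2)^β - (l^2-x^2)^(β+1)) * (V x)^2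
          + C₁*((l^2 - x^2) ^ γ * (V x)^2)) := by
      apply setIntegral_mono_on (int_fβ.const_mul ((β+1)*A)) (int_PV.add (hγ_int.const_mul C₁))
        measurableSet_Ioo
      intro x hx
      show (β+1)*A*((l^2 - x^2) ^ β * (V x)^2)
        ≤ (2*(β+1)*x^2*(l^2-x^2)^β - (l^2-x^2)^(β+1)) * (V x)^2
          + C₁*((l^2 - x^2) ^ γ * (V x)^2)
      have hw : 0 < l^2 - x^2 := auxWpos hx
      have hwβ0 : (0:ℝ) ≤ (l^2-x^2)^β := Real.rpow_nonneg hw.le _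
      have hwγ0 : (0:ℝ) ≤ (l^2-x^2)^γ := Real.rpow_nonneg hw.le _
      have hw1 : (l^2-x^2)^(β+1) = (l^2-x^2)^β * (l^2-x^2) :=
        Real.rpow_add_one (ne_of_gt hw) β
      have claim : (β+1)*A*((l^2-x^2)^β) ≤
          (2*(β+1)*x^2*(l^2-x^2)^β - (l^2-x^2)^(β+1)) + C₁*(l^2-x^2)^γ := by
        rcases le_or_gt A (x^2) with hcase | hcase
        · have hwle : l^2 - x^2 ≤ (β+1)*A/2 := by nlinarith [hx.1, hx.2]
          have hC₁w : 0 ≤ C₁*(l^2-x^2)^γ := mul_nonneg hC₁0.le hwγ0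
          rw [hw1]
          nlinarith [mul_le_mul_of_nonneg_right hcase hwβ0,
            mul_le_mul_of_nonneg_left hwle hwβ0,
            mul_nonneg (mul_nonneg hβ1.le hA0.le) hwβ0]
        · have hwlo : l^2 - A ≤ l^2 - x^2 := by linarith
          have hwhi : l^2 - x^2 ≤ l^2 := by nlinarith [sq_nonneg x]
          have hK1 : (l^2-x^2)^β ≤ K₁ := hK₁ _ hwlo hwhi
          have hK2 : K₂ ≤ (l^2-x^2)^γ := hK₂ _ hwlo hwhi
          have hwβ1 : (l^2-x^2)^(β+1) ≤ K₁ * l^2 := by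
            rw [hw1]
            exact mul_le_mul hK1 hwhi hw.le hK₁0.le
          have hCK : C₁ * K₂ = ((β+1)*A + l^2)*K₁ := by
            rw [hC₁def]; field_simp
          nlinarith [mul_le_mul_of_nonneg_left hK1 (by nlinarith : (0:ℝ) ≤ (β+1)*A),
            mul_nonneg (mul_nonneg (by nlinarith : (0:ℝ) ≤ 2*(β+1)) (sq_nonneg x)) hwβ0,
            mul_le_mul_of_nonneg_left hK2 hC₁0.le]
      calc (β+1)*A*((l^2 - x^2) ^ β * (V x)^2)
          = ((β+1)*A*((l^2-x^2)^β)) * (V x)^2 := by ring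
        _ ≤ ((2*(β+1)*x^2*(l^2-x^2)^β - (l^2-x^2)^(β+1)) + C₁*(l^2-x^2)^γ) * (V x)^2 :=
            mul_le_mul_of_nonneg_right claim (sq_nonneg _)
        _ = (2*(β+1)*x^2*(l^2-x^2)^β - (l^2-x^2)^(β+1)) * (V x)^2
            + C₁*((l^2 - x^2) ^ γ * (V x)^2) := by ring
    rw [integral_const_mul] at hmono
    rw [integral_add int_PV (hγ_int.const_mul C₁), integral_const_mul] at hmono
    exact hmono
  -- Step (ii): ∫ P V² = ∫ F2
  have hstep2 : (∫ x in S, (2*(β+1)*x^2*(l^2-x^2)^β - (l^2-x^2)^(β+1)) * (V x)^2)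
      = ∫ x in S, 2*x*(l^2-x^2)^(β+1)*(V x)*(deriv V x) := by
    have h := integral_sub int_PV int_F2
    rw [hftc] at h
    linarith [h]
  -- Step (iii) : ∫ F2 ≤ ε l² I + ε⁻¹ D
  have hstep3 : (∫ x in S, 2*x*(l^2-x^2)^(β+1)*(V x)*(deriv V x))
      ≤ ε*l^2*I + ε⁻¹*D := by
    have hmono : (∫ x in S, 2*x*(l^2-x^2)^(β+1)*(V x)*(deriv V x))
        ≤ ∫ x in S, (ε*l^2*((l^2 - x^2) ^ β * (V x)^2)
            + ε⁻¹*((l^2 - x^2) ^ (β+2) * (deriv V x)^2)) := by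
      apply setIntegral_mono_on int_F2
        ((int_fβ.const_mul (ε*l^2)).add (int_D.const_mul ε⁻¹)) measurableSet_Ioo
      intro x hx
      show 2*x*(l^2-x^2)^(β+1)*(V x)*(deriv V x)
        ≤ ε*l^2*((l^2 - x^2) ^ β * (V x)^2) + ε⁻¹*((l^2 - x^2) ^ (β+2) * (deriv V x)^2)
      have hw : 0 < l^2 - x^2 := auxWpos hx
      have hwβ0 : (0:ℝ) ≤ (l^2-x^2)^β := Real.rpow_nonneg hw.le _
      have hw1 : (l^2-x^2)^(β+1) = (l^2-x^2)^β * (l^2-x^2) :=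
        Real.rpow_add_one (ne_of_gt hw) β
      have hw2 : (l^2-x^2)^(β+2) = (l^2-x^2)^β * (l^2-x^2)^2 := by
        rw [show β+2 = β+1+1 from by ring, Real.rpow_add_one (ne_of_gt hw),
          Real.rpow_add_one (ne_of_gt hw)]
        ring
      have hx2 : x^2 ≤ l^2 := by nlinarith [hx.1, hx.2]
      have hmul := mul_le_mul_of_nonneg_right
        (auxAmgm hε (x*V x) ((l^2-x^2)*deriv V x)) hwβ0
      have h2 : ε*(x*V x)^2*((l^2-x^2)^β) ≤ ε*l^2*(V x)^2*((l^2-x^2)^β) := by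
        apply mul_le_mul_of_nonneg_right _ hwβ0
        nlinarith [mul_nonneg (mul_nonneg hε.le (sub_nonneg.mpr hx2)) (sq_nonneg (V x))]
      rw [hw1, hw2]
      linarith [hmul, h2]
    rw [integral_add (int_fβ.const_mul (ε*l^2)) (int_D.const_mul ε⁻¹),
      integral_const_mul, integral_const_mul] at hmono
    exact hmono
  -- absorption
  have hkey : I ≤ C * (Γι + D) := by
    have h1 : (β+1)*A*I ≤ ε*l^2*I + ε⁻¹*D + C₁*Γι := by
      rw [hstep2] at hstep1
      linarith [hstep1, hstep3]
    rw [hεl] at h1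
    have h2 : ((β+1)*A/2)*I ≤ ε⁻¹*D + C₁*Γι := by linarith
    have h3 : ε⁻¹*D + C₁*Γι ≤ M*(Γι + D) := by
      have := le_max_left ε⁻¹ C₁
      have := le_max_right ε⁻¹ C₁
      nlinarith [hD0, hΓ0]
    have hpos : (0:ℝ) < (β+1)*A/2 := div_pos (mul_pos hβ1 hA0) two_pos
    apply le_of_mul_le_mul_left _ hpos
    have h4 : ((β+1)*A/2) * (C * (Γι + D)) = M*(Γι + D) := by
      rw [hCdef]; field_simp
    rw [h4]
    linarith
  -- final conversion to lintegrals
  have hfβ_nonneg : 0 ≤ᵐ[volume.restrict S] (fun x : ℝ => (l^2 - x^2) ^ β * (V x)^2) := by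
    filter_upwards [ae_restrict_mem measurableSet_Ioo] with x hx
    exact mul_nonneg (Real.rpow_nonneg (auxWpos hx).le _) (sq_nonneg _)
  have hg_nonneg : 0 ≤ᵐ[volume.restrict S]
      (fun x : ℝ => (l^2 - x^2) ^ γ * (V x)^2 + (l^2 - x^2) ^ (β + 2) * (deriv V x)^2) := by
    filter_upwards [ae_restrict_mem measurableSet_Ioo] with x hx
    exact add_nonneg (mul_nonneg (Real.rpow_nonneg (auxWpos hx).le _) (sq_nonneg _))
      (mul_nonneg (Real.rpow_nonneg (auxWpos hx).le _) (sq_nonneg _))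
  have hg_int : IntegrableOn
      (fun x : ℝ => (l^2 - x^2) ^ γ * (V x)^2 + (l^2 - x^2) ^ (β + 2) * (deriv V x)^2)
      S volume := hγ_int.add int_D
  have hsum : (∫ x in S, ((l^2 - x^2) ^ γ * (V x)^2 + (l^2 - x^2) ^ (β + 2) * (deriv V x)^2))
      = Γι + D := integral_add hγ_int int_D
  calc (∫⁻ x in Set.Ioo (-l) l, ENNReal.ofReal ((l^2 - x^2) ^ β * (V x)^2))
      = ENNReal.ofReal I := (ofReal_integral_eq_lintegral_ofReal int_fβ hfβ_nonneg).symm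
    _ ≤ ENNReal.ofReal (C * (Γι + D)) := ENNReal.ofReal_le_ofReal hkey
    _ = ENNReal.ofReal C * ENNReal.ofReal (Γι + D) := ENNReal.ofReal_mul hC.le
    _ = ENNReal.ofReal C * ENNReal.ofReal (∫ x in S,
          ((l^2 - x^2) ^ γ * (V x)^2 + (l^2 - x^2) ^ (β + 2) * (deriv V x)^2)) := by
        rw [hsum]
    _ = ENNReal.ofReal C * ∫⁻ x in Set.Ioo (-l) l,
          ENNReal.ofReal ((l^2 - x^2) ^ γ * (V x)^2 + (l^2 - x^2) ^ (β + 2) * (deriv V x)^2) := by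
        rw [ofReal_integral_eq_lintegral_ofReal hg_int hg_nonneg]
end

section
/- Let ℓ > 0, β < -1, and γ ∈ ℝ. Then there exists a constant C = C(β,γ,ℓ) < ∞ such that for all V ∈ C^∞([-ℓ,ℓ]) with V(ℓ) = V(-ℓ) = 0, the inequality ∫_{-ℓ}^{ℓ} (ℓ²-x²)^β V(x)² dx ≤ C ∫_{-ℓ}^{ℓ} ( (ℓ²-x²)^γ V(x)² + (ℓ²-x²)^{β+2} V'(x)² ) dx holds (as an inequality in [0,∞], both sides possibly being infinite). -/
open MeasureTheory Set

set_option linter.unusedVariables false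

open scoped ENNReal

private lemma lint_rpow {a b p : ℝ} (hab : a < b) (hp : -1 < p) :
    ∫⁻ t in Ioo a b, ENNReal.ofReal ((b - t) ^ p)
      = ENNReal.ofReal ((b - a) ^ (p+1) / (p+1)) := by
  have hii : IntervalIntegrable (fun t : ℝ => (b - t) ^ p) volume a b := by
    have h0 : IntervalIntegrable (fun s : ℝ => s ^ p) volume (b - b) (b - a) :=
      intervalIntegral.intervalIntegrable_rpow' hp
    simpa using (h0.comp_sub_left b).symm
  have hIoo : IntegrableOn (fun t : ℝ => (b - t) ^ p) (Ioo a b) := by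
    rw [← intervalIntegrable_iff_integrableOn_Ioo_of_le hab.le]; exact hii
  have hnn : 0 ≤ᵐ[volume.restrict (Ioo a b)] fun t : ℝ => (b - t) ^ p := by
    filter_upwards [ae_restrict_mem measurableSet_Ioo] with t ht
    exact Real.rpow_nonneg (by linarith [ht.2]) p
  rw [← ofReal_integral_eq_lintegral_ofReal hIoo hnn]
  congr 1
  have h1 : ∫ t in Ioo a b, (b - t) ^ p = ∫ t in a..b, (b - t) ^ p := by
    rw [intervalIntegral.integral_of_le hab.le, integral_Ioc_eq_integral_Ioo]
  rw [h1, intervalIntegral.integral_comp_sub_left (fun s : ℝ => s ^ p) b, sub_self,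
    integral_rpow (Or.inl hp), Real.zero_rpow (by linarith), sub_zero]

private lemma lint_rpow2 {t l p : ℝ} (ht0 : 0 < t) (htl : t < l) (hp : p < -1) :
    ∫⁻ x in Ioo 0 t, ENNReal.ofReal ((l - x) ^ p)
      ≤ ENNReal.ofReal ((l - t) ^ (p+1) / (-(p+1))) := by
  have hlt : 0 < l - t := by linarith
  have hcont : ContinuousOn (fun x : ℝ => (l - x) ^ p) (Icc 0 t) := by
    apply ContinuousOn.rpow_const
    · exact (continuous_const.sub continuous_id).continuousOn
    · intro x hx
      refine Or.inl (ne_of_gt ?_)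
      have h2 := hx.2
      linarith
  have hIoo : IntegrableOn (fun x : ℝ => (l - x) ^ p) (Ioo 0 t) :=
    (hcont.integrableOn_Icc).mono_set Ioo_subset_Icc_self
  have hnn : 0 ≤ᵐ[volume.restrict (Ioo 0 t)] fun x : ℝ => (l - x) ^ p := by
    filter_upwards [ae_restrict_mem measurableSet_Ioo] with x hx
    exact Real.rpow_nonneg (by linarith [hx.2]) p
  rw [← ofReal_integral_eq_lintegral_ofReal hIoo hnn]
  apply ENNReal.ofReal_le_ofReal
  have h1 : ∫ x in Ioo 0 t, (l - x) ^ p = ∫ x in (0:ℝ)..t, (l - x) ^ p := by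
    rw [intervalIntegral.integral_of_le ht0.le, integral_Ioc_eq_integral_Ioo]
  have h2 : (0:ℝ) ∉ Set.uIcc (l - t) (l - 0) := by
    rw [Set.mem_uIcc]
    push_neg
    refine ⟨fun h => absurd h (by linarith), fun h => absurd h (by linarith)⟩
  rw [h1, intervalIntegral.integral_comp_sub_left (fun s : ℝ => s ^ p) l,
    integral_rpow (Or.inr ⟨by linarith, h2⟩)]
  rw [sub_zero]
  have hl0 : 0 < l := by linarith
  have hpow : 0 < l ^ (p+1) := Real.rpow_pos_of_pos hl0 _
  have hre : ((l:ℝ) ^ (p+1) - (l - t) ^ (p+1)) / (p+1)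
      = ((l - t) ^ (p+1) - l ^ (p+1)) / (-(p+1)) := by
    rw [div_eq_div_iff (by linarith) (by linarith)]; ring
  rw [hre, div_le_div_iff₀ (by linarith) (by linarith)]
  nlinarith [Real.rpow_pos_of_pos hlt (p+1)]

private lemma ptwise {l β : ℝ} (hβ : β < -1) {f : ℝ → ℝ} (hf : ContDiff ℝ (⊤ : ℕ∞) f)
    (h0 : f l = 0) {x : ℝ} (hx : x ∈ Ioo 0 l) :
    ENNReal.ofReal ((f x)^2) ≤
      ENNReal.ofReal ((l - x) ^ (1 - (β+3)/2) / (1 - (β+3)/2)) *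
        ∫⁻ t in Ioo x l, ENNReal.ofReal ((l - t) ^ ((β+3)/2) * (deriv f t)^2) := by
  set α : ℝ := (β+3)/2 with hαdef
  have hα1 : α < 1 := by rw [hαdef]; linarith
  have hxl : x < l := hx.2
  have hf' : Continuous (deriv f) := hf.continuous_deriv (by simp)
  -- FTC
  have hFTC : ∫ t in x..l, deriv f t = f l - f x :=
    intervalIntegral.integral_deriv_eq_sub
      (fun t _ => (hf.differentiable (by simp)).differentiableAt)
      (hf'.intervalIntegrable _ _)
  have habs : |f x| ≤ ∫ t in Ioo x l, |deriv f t| := by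
    have hfx : f x = -(∫ t in x..l, deriv f t) := by rw [hFTC, h0]; ring
    rw [hfx, abs_neg]
    calc |∫ t in x..l, deriv f t| ≤ ∫ t in x..l, |deriv f t| :=
          intervalIntegral.abs_integral_le_integral_abs hxl.le
      _ = ∫ t in Ioo x l, |deriv f t| := by
          rw [intervalIntegral.integral_of_le hxl.le, integral_Ioc_eq_integral_Ioo]
  have hIint : IntegrableOn (fun t : ℝ => |deriv f t|) (Ioo x l) :=
    (hf'.abs.integrableOn_Ioc).mono_set Ioo_subset_Ioc_self
  have h1 : ENNReal.ofReal |f x| ≤ ∫⁻ t in Ioo x l, ENNReal.ofReal |deriv f t| := by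
    calc ENNReal.ofReal |f x| ≤ ENNReal.ofReal (∫ t in Ioo x l, |deriv f t|) :=
          ENNReal.ofReal_le_ofReal habs
      _ = _ := ofReal_integral_eq_lintegral_ofReal hIint
          (ae_of_all _ fun t => abs_nonneg _)
  -- Hölder
  set G : ℝ → ENNReal := fun t => ENNReal.ofReal ((l - t) ^ (-(α/2))) with hG
  set H : ℝ → ENNReal := fun t => ENNReal.ofReal ((l - t) ^ (α/2) * |deriv f t|) with hH
  have hmeasG : AEMeasurable G (volume.restrict (Ioo x l)) := by fun_prop
  have hmeasH : AEMeasurable H (volume.restrict (Ioo x l)) := by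
    have : Measurable (deriv f) := hf'.measurable
    fun_prop
  have hsplit : ∫⁻ t in Ioo x l, ENNReal.ofReal |deriv f t|
      = ∫⁻ t in Ioo x l, (G * H) t := by
    apply setLIntegral_congr_fun measurableSet_Ioo
    intro t ht
    have hlt : 0 < l - t := by linarith [ht.2]
    simp only [hG, hH, Pi.mul_apply]
    rw [← ENNReal.ofReal_mul (Real.rpow_nonneg hlt.le _), ← mul_assoc,
      ← Real.rpow_add hlt, neg_add_cancel, Real.rpow_zero, one_mul]
  have hHolder : ∫⁻ t in Ioo x l, (G * H) t ≤
      (∫⁻ t in Ioo x l, G t ^ (2:ℝ)) ^ ((1:ℝ)/2) *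
      (∫⁻ t in Ioo x l, H t ^ (2:ℝ)) ^ ((1:ℝ)/2) :=
    ENNReal.lintegral_mul_le_Lp_mul_Lq _ ⟨by norm_num, by norm_num, by norm_num⟩ hmeasG hmeasH
  have hG2 : ∫⁻ t in Ioo x l, G t ^ (2:ℝ)
      = ENNReal.ofReal ((l - x) ^ (1-α) / (1-α)) := by
    have hcongr : ∫⁻ t in Ioo x l, G t ^ (2:ℝ)
        = ∫⁻ t in Ioo x l, ENNReal.ofReal ((l - t) ^ (-α)) := by
      apply setLIntegral_congr_fun measurableSet_Ioo
      intro t ht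
      have hlt : (0:ℝ) < l - t := by linarith [ht.2]
      beta_reduce
      rw [hG, ENNReal.ofReal_rpow_of_nonneg (Real.rpow_nonneg hlt.le _) (by norm_num),
        ← Real.rpow_mul hlt.le]
      norm_num
    rw [hcongr, lint_rpow hxl (by rw [hαdef]; linarith)]
    ring_nf
  have hH2 : ∫⁻ t in Ioo x l, H t ^ (2:ℝ)
      = ∫⁻ t in Ioo x l, ENNReal.ofReal ((l - t) ^ α * (deriv f t)^2) := by
    apply setLIntegral_congr_fun measurableSet_Ioo
    intro t ht
    have hlt : (0:ℝ) < l - t := by linarith [ht.2]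
    beta_reduce
    rw [hH, ENNReal.ofReal_rpow_of_nonneg
        (mul_nonneg (Real.rpow_nonneg hlt.le _) (abs_nonneg _)) (by norm_num)]
    congr 1
    rw [Real.mul_rpow (Real.rpow_nonneg hlt.le _) (abs_nonneg _), ← Real.rpow_mul hlt.le,
      show (2:ℝ) = ((2:ℕ):ℝ) by norm_num, Real.rpow_natCast, sq_abs]
    norm_num
  have hfx2 : ENNReal.ofReal ((f x)^2) = (ENNReal.ofReal |f x|) ^ (2:ℝ) := by
    rw [ENNReal.ofReal_rpow_of_nonneg (abs_nonneg _) (by norm_num)]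
    congr 1
    rw [show (2:ℝ) = ((2:ℕ):ℝ) by norm_num, Real.rpow_natCast, sq_abs]
  calc ENNReal.ofReal ((f x)^2) = (ENNReal.ofReal |f x|) ^ (2:ℝ) := hfx2
    _ ≤ (∫⁻ t in Ioo x l, ENNReal.ofReal |deriv f t|) ^ (2:ℝ) :=
        ENNReal.rpow_le_rpow h1 (by norm_num)
    _ = (∫⁻ t in Ioo x l, (G * H) t) ^ (2:ℝ) := by rw [hsplit]
    _ ≤ ((∫⁻ t in Ioo x l, G t ^ (2:ℝ)) ^ ((1:ℝ)/2) *
          (∫⁻ t in Ioo x l, H t ^ (2:ℝ)) ^ ((1:ℝ)/2)) ^ (2:ℝ) :=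
        ENNReal.rpow_le_rpow hHolder (by norm_num)
    _ = (∫⁻ t in Ioo x l, G t ^ (2:ℝ)) * (∫⁻ t in Ioo x l, H t ^ (2:ℝ)) := by
        rw [ENNReal.mul_rpow_of_nonneg _ _ (by norm_num : (0:ℝ) ≤ 2),
          ← ENNReal.rpow_mul, ← ENNReal.rpow_mul]
        norm_num
    _ = _ := by rw [hG2, hH2]


private theorem hardy_half {l β : ℝ} (hl : 0 < l) (hβ : β < -1) {f : ℝ → ℝ}
    (hf : ContDiff ℝ (⊤ : ℕ∞) f) (h0 : f l = 0) :
    ∫⁻ x in Ioo 0 l, ENNReal.ofReal ((l - x) ^ β * (f x)^2)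
      ≤ ENNReal.ofReal (4 / (β+1)^2) *
        ∫⁻ t in Ioo 0 l, ENNReal.ofReal ((l - t) ^ (β+2) * (deriv f t)^2) := by
  set α : ℝ := (β+3)/2 with hαdef
  have h1α : (0:ℝ) < 1 - α := by rw [hαdef]; linarith
  have hαβ : (0:ℝ) < -((β+1-α)+1) := by rw [hαdef]; linarith
  have hαβ' : (0:ℝ) < α-β-2 := by rw [hαdef]; linarith
  have hf' : Continuous (deriv f) := hf.continuous_deriv (by simp)
  have hfmeas : Measurable (deriv f) := hf'.measurable
  set H : ℝ → ℝ≥0∞ := fun t => ENNReal.ofReal ((l-t)^α * (deriv f t)^2) with hHdef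
  set G : ℝ → ℝ≥0∞ := fun x => ENNReal.ofReal ((l-x)^(β+1-α)) with hGdef
  have hmeasH : Measurable H := by fun_prop
  have hmeasG : Measurable G := by fun_prop
  -- step 1 & 2
  have step2 : ∫⁻ x in Ioo 0 l, ENNReal.ofReal ((l - x) ^ β * (f x)^2)
      ≤ ∫⁻ x in Ioo 0 l, ENNReal.ofReal (1/(1-α)) * (G x * ∫⁻ t in Ioo x l, H t) := by
    apply setLIntegral_mono' measurableSet_Ioo
    intro x hx
    have hpos : (0:ℝ) < l - x := by linarith [hx.2]
    have hb := ptwise hβ hf h0 hx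
    calc ENNReal.ofReal ((l - x) ^ β * (f x)^2)
        = ENNReal.ofReal ((l-x)^β) * ENNReal.ofReal ((f x)^2) := by
          rw [← ENNReal.ofReal_mul (Real.rpow_nonneg hpos.le _)]
      _ ≤ ENNReal.ofReal ((l-x)^β) *
          (ENNReal.ofReal ((l - x) ^ (1 - α) / (1 - α)) *
            ∫⁻ t in Ioo x l, H t) := mul_le_mul_right hb _
      _ = ENNReal.ofReal (1/(1-α)) * (G x * ∫⁻ t in Ioo x l, H t) := by
          rw [← mul_assoc, ← mul_assoc, ← ENNReal.ofReal_mul (Real.rpow_nonneg hpos.le _)]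
          congr 2
          rw [div_eq_mul_one_div, ← mul_assoc, ← Real.rpow_add hpos]
          rw [hGdef]
          rw [← ENNReal.ofReal_mul (div_nonneg zero_le_one h1α.le)]
          congr 1
          ring_nf
  -- Tonelli core
  set k : ℝ × ℝ → ℝ≥0∞ := fun p => if p.1 < p.2 ∧ p.2 < l then G p.1 * H p.2 else 0
    with hkdef
  have hS : MeasurableSet {p : ℝ × ℝ | p.1 < p.2 ∧ p.2 < l} :=
    (measurableSet_lt measurable_fst measurable_snd).inter
      (measurableSet_lt measurable_snd measurable_const)
  have hkmeas : Measurable k :=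
    Measurable.ite hS ((hmeasG.comp measurable_fst).mul (hmeasH.comp measurable_snd))
      measurable_const
  have hinner : ∀ x ∈ Ioo 0 l, G x * ∫⁻ t in Ioo x l, H t = ∫⁻ t, k (x, t) := by
    intro x hx
    have hk : ∀ t, k (x, t) = (Ioo x l).indicator (fun t => G x * H t) t := by
      intro t
      simp only [hkdef, Set.indicator_apply, mem_Ioo]
    rw [lintegral_congr hk, lintegral_indicator measurableSet_Ioo,
      lintegral_const_mul' _ _ ENNReal.ofReal_ne_top]
  have core : ∫⁻ x in Ioo 0 l, G x * ∫⁻ t in Ioo x l, H t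
      ≤ ENNReal.ofReal (1/(α-β-2)) *
        ∫⁻ t in Ioo 0 l, ENNReal.ofReal ((l - t) ^ (β+2) * (deriv f t)^2) := by
    calc ∫⁻ x in Ioo 0 l, G x * ∫⁻ t in Ioo x l, H t
        = ∫⁻ x in Ioo 0 l, ∫⁻ t, k (x, t) :=
          setLIntegral_congr_fun measurableSet_Ioo hinner
      _ = ∫⁻ t, ∫⁻ x in Ioo 0 l, k (x, t) :=
          lintegral_lintegral_swap hkmeas.aemeasurable
      _ ≤ ∫⁻ t, (Ioo 0 l).indicator
            (fun t => ENNReal.ofReal ((l-t)^((β+1-α)+1) / (-((β+1-α)+1))) * H t) t := by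
          apply lintegral_mono
          intro t
          by_cases ht : t ∈ Ioo 0 l
          · rw [indicator_of_mem ht]
            calc ∫⁻ x in Ioo 0 l, k (x, t)
                ≤ ∫⁻ x in Ioo 0 l, (Ioo 0 t).indicator G x * H t := by
                  apply setLIntegral_mono' measurableSet_Ioo
                  intro x hx
                  simp only [hkdef]
                  split_ifs with hcond
                  · rw [indicator_of_mem (show x ∈ Ioo 0 t from ⟨hx.1, hcond.1⟩)]
                  · exact zero_le
              _ = (∫⁻ x in Ioo 0 l, (Ioo 0 t).indicator G x) * H t :=
                  lintegral_mul_const' _ _ ENNReal.ofReal_ne_top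
              _ ≤ (∫⁻ x in Ioo 0 t, G x) * H t := by
                  apply mul_le_mul_left
                  calc ∫⁻ x in Ioo 0 l, (Ioo 0 t).indicator G x
                      ≤ ∫⁻ x, (Ioo 0 t).indicator G x := setLIntegral_le_lintegral _ _
                    _ = ∫⁻ x in Ioo 0 t, G x := lintegral_indicator measurableSet_Ioo _
              _ ≤ ENNReal.ofReal ((l-t)^((β+1-α)+1) / (-((β+1-α)+1))) * H t := by
                  apply mul_le_mul_left
                  exact lint_rpow2 ht.1 ht.2 (by rw [hαdef]; linarith)
          · rw [indicator_of_notMem ht]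
            have hz : ∀ x ∈ Ioo 0 l, k (x, t) = 0 := by
              intro x hx
              simp only [hkdef]
              rw [if_neg]
              rintro ⟨h1, h2⟩
              exact ht ⟨lt_trans hx.1 h1, h2⟩
            exact le_of_eq (by
              show ∫⁻ x in Ioo 0 l, k (x, t) = 0
              rw [setLIntegral_congr_fun measurableSet_Ioo hz]; simp)
      _ = ∫⁻ t in Ioo 0 l,
            ENNReal.ofReal ((l-t)^((β+1-α)+1) / (-((β+1-α)+1))) * H t :=
          lintegral_indicator measurableSet_Ioo _
      _ = ∫⁻ t in Ioo 0 l, ENNReal.ofReal (1/(α-β-2)) *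
            ENNReal.ofReal ((l - t) ^ (β+2) * (deriv f t)^2) := by
          apply setLIntegral_congr_fun measurableSet_Ioo
          intro t ht
          have hpos : (0:ℝ) < l - t := by linarith [ht.2]
          beta_reduce
          rw [hHdef, ← ENNReal.ofReal_mul (div_nonneg (Real.rpow_nonneg hpos.le _) hαβ.le),
            ← ENNReal.ofReal_mul (div_nonneg zero_le_one hαβ'.le)]
          · congr 1
            rw [div_eq_mul_one_div, mul_assoc, mul_comm ((1:ℝ)/(-((β+1-α)+1))), ← mul_assoc,
              ← mul_assoc, ← Real.rpow_add hpos]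
            have he1 : β+1-α+1+α = β+2 := by ring
            have he2 : (1:ℝ)/(-((β+1-α)+1)) = 1/(α-β-2) := by ring_nf
            rw [he1, he2]
            ring
      _ = ENNReal.ofReal (1/(α-β-2)) *
          ∫⁻ t in Ioo 0 l, ENNReal.ofReal ((l - t) ^ (β+2) * (deriv f t)^2) :=
          lintegral_const_mul' _ _ ENNReal.ofReal_ne_top
  -- assemble
  have hne : β + 1 ≠ 0 := by intro h; rw [show β = -1 by linarith] at hβ; exact lt_irrefl _ hβ
  calc ∫⁻ x in Ioo 0 l, ENNReal.ofReal ((l - x) ^ β * (f x)^2)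
      ≤ ∫⁻ x in Ioo 0 l, ENNReal.ofReal (1/(1-α)) * (G x * ∫⁻ t in Ioo x l, H t) := step2
    _ = ENNReal.ofReal (1/(1-α)) * ∫⁻ x in Ioo 0 l, G x * ∫⁻ t in Ioo x l, H t :=
        lintegral_const_mul' _ _ ENNReal.ofReal_ne_top
    _ ≤ ENNReal.ofReal (1/(1-α)) * (ENNReal.ofReal (1/(α-β-2)) *
          ∫⁻ t in Ioo 0 l, ENNReal.ofReal ((l - t) ^ (β+2) * (deriv f t)^2)) :=
        mul_le_mul_right core _
    _ = ENNReal.ofReal (4/(β+1)^2) *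
          ∫⁻ t in Ioo 0 l, ENNReal.ofReal ((l - t) ^ (β+2) * (deriv f t)^2) := by
        rw [← mul_assoc, ← ENNReal.ofReal_mul (div_nonneg zero_le_one h1α.le)]
        congr 2
        rw [hαdef]
        rw [div_mul_div_comm, one_mul]
        rw [div_eq_div_iff (by nlinarith) (by positivity)]
        ring


private theorem half_full {l β : ℝ} (hl : 0 < l) (hβ : β < -1) {f : ℝ → ℝ}
    (hf : ContDiff ℝ (⊤ : ℕ∞) f) (h0 : f l = 0) :
    ∫⁻ x in Ioo 0 l, ENNReal.ofReal ((l^2 - x^2) ^ β * (f x)^2)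
      ≤ ENNReal.ofReal (l^β * (4/(β+1)^2) *
          (max (l ^ (-(β+2))) ((2*l) ^ (-(β+2))))) *
        ∫⁻ x in Ioo 0 l, ENNReal.ofReal ((l^2 - x^2) ^ (β+2) * (deriv f x)^2) := by
  set M : ℝ := max (l ^ (-(β+2))) ((2*l) ^ (-(β+2))) with hM
  have hlβ : (0:ℝ) < l ^ β := Real.rpow_pos_of_pos hl _
  have hMpos : (0:ℝ) < M := lt_max_iff.mpr (Or.inl (Real.rpow_pos_of_pos hl _))
  have step1 : ∫⁻ x in Ioo 0 l, ENNReal.ofReal ((l^2 - x^2) ^ β * (f x)^2)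
      ≤ ENNReal.ofReal (l^β) *
        ∫⁻ x in Ioo 0 l, ENNReal.ofReal ((l - x) ^ β * (f x)^2) := by
    rw [← lintegral_const_mul' _ _ ENNReal.ofReal_ne_top]
    apply setLIntegral_mono' measurableSet_Ioo
    intro x hx
    rw [← ENNReal.ofReal_mul hlβ.le]
    apply ENNReal.ofReal_le_ofReal
    have h1 : (0:ℝ) < l - x := by linarith [hx.2]
    have h2 : (0:ℝ) < l + x := by linarith [hx.1]
    have hw : l^2 - x^2 = (l - x) * (l + x) := by ring
    rw [hw, Real.mul_rpow h1.le h2.le]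
    have h3 : (l + x) ^ β ≤ l ^ β :=
      Real.rpow_le_rpow_of_nonpos hl (by linarith [hx.1]) (by linarith)
    have h4 : (0:ℝ) ≤ (l - x) ^ β := Real.rpow_nonneg h1.le _
    nlinarith [sq_nonneg (f x), mul_nonneg h4 (sq_nonneg (f x))]
  have step3 : ∫⁻ t in Ioo 0 l, ENNReal.ofReal ((l - t) ^ (β+2) * (deriv f t)^2)
      ≤ ENNReal.ofReal M *
        ∫⁻ t in Ioo 0 l, ENNReal.ofReal ((l^2 - t^2) ^ (β+2) * (deriv f t)^2) := by
    rw [← lintegral_const_mul' _ _ ENNReal.ofReal_ne_top]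
    apply setLIntegral_mono' measurableSet_Ioo
    intro t ht
    rw [← ENNReal.ofReal_mul hMpos.le]
    apply ENNReal.ofReal_le_ofReal
    have h1 : (0:ℝ) < l - t := by linarith [ht.2]
    have h2 : (0:ℝ) < l + t := by linarith [ht.1]
    have hw : l - t = (l^2 - t^2) * (l + t)⁻¹ := by field_simp; ring
    have hwpos : (0:ℝ) < l^2 - t^2 := by nlinarith
    rw [hw, Real.mul_rpow hwpos.le (by positivity), Real.inv_rpow h2.le,
      ← Real.rpow_neg h2.le]
    have hbound : (l + t) ^ (-(β+2)) ≤ M := by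
      rcases le_or_gt 0 (-(β+2)) with hq | hq
      · refine le_trans ?_ (le_max_right _ _)
        exact Real.rpow_le_rpow h2.le (by linarith [ht.2]) hq
      · refine le_trans ?_ (le_max_left _ _)
        exact Real.rpow_le_rpow_of_nonpos hl (by linarith [ht.1]) hq.le
    have hw2 : (0:ℝ) ≤ (l^2 - t^2) ^ (β+2) := Real.rpow_nonneg hwpos.le _
    nlinarith [sq_nonneg (deriv f t), mul_nonneg hw2 (sq_nonneg (deriv f t)),
      Real.rpow_nonneg h2.le (-(β+2))]
  calc ∫⁻ x in Ioo 0 l, ENNReal.ofReal ((l^2 - x^2) ^ β * (f x)^2)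
      ≤ ENNReal.ofReal (l^β) *
        ∫⁻ x in Ioo 0 l, ENNReal.ofReal ((l - x) ^ β * (f x)^2) := step1
    _ ≤ ENNReal.ofReal (l^β) * (ENNReal.ofReal (4/(β+1)^2) *
        ∫⁻ t in Ioo 0 l, ENNReal.ofReal ((l - t) ^ (β+2) * (deriv f t)^2)) :=
        mul_le_mul_right (hardy_half hl hβ hf h0) _
    _ ≤ ENNReal.ofReal (l^β) * (ENNReal.ofReal (4/(β+1)^2) * (ENNReal.ofReal M *
        ∫⁻ t in Ioo 0 l, ENNReal.ofReal ((l^2 - t^2) ^ (β+2) * (deriv f t)^2))) :=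
        mul_le_mul_right (mul_le_mul_right step3 _) _
    _ = ENNReal.ofReal (l^β * (4/(β+1)^2) * M) *
        ∫⁻ x in Ioo 0 l, ENNReal.ofReal ((l^2 - x^2) ^ (β+2) * (deriv f x)^2) := by
        rw [← mul_assoc, ← mul_assoc, ← ENNReal.ofReal_mul hlβ.le,
          ← ENNReal.ofReal_mul (by positivity)]


theorem stmt6 (l : ℝ) (hl : 0 < l) (β γ : ℝ) (hβ : β < -1) :
    ∃ C : ℝ, 0 < C ∧ ∀ V : ℝ → ℝ, ContDiff ℝ (⊤ : ℕ∞) V → V l = 0 → V (-l) = 0 →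
      (∫⁻ x in Set.Ioo (-l) l, ENNReal.ofReal ((l^2 - x^2) ^ β * (V x)^2))
        ≤ ENNReal.ofReal C *
            ∫⁻ x in Set.Ioo (-l) l,
              ENNReal.ofReal ((l^2 - x^2) ^ γ * (V x)^2 + (l^2 - x^2) ^ (β + 2) * (deriv V x)^2) := by
  have hβ1 : β + 1 ≠ 0 := by intro h; rw [show β = -1 by linarith] at hβ; exact lt_irrefl _ hβ
  set K : ℝ := l^β * (4/(β+1)^2) * (max (l ^ (-(β+2))) ((2*l) ^ (-(β+2)))) with hK
  have hKpos : 0 < K := by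
    apply mul_pos (mul_pos (Real.rpow_pos_of_pos hl _) (by positivity))
    exact lt_max_iff.mpr (Or.inl (Real.rpow_pos_of_pos hl _))
  refine ⟨2 * K, by positivity, ?_⟩
  intro V hV hVl hVml
  -- the RHS lintegral
  set R : ℝ≥0∞ := ∫⁻ x in Set.Ioo (-l) l,
      ENNReal.ofReal ((l^2 - x^2) ^ γ * (V x)^2 + (l^2 - x^2) ^ (β + 2) * (deriv V x)^2)
    with hR
  -- the (β+2)-part dominates each half integral
  have hdom : ∀ s : Set ℝ, s ⊆ Ioo (-l) l → MeasurableSet s →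
      (∫⁻ x in s, ENNReal.ofReal ((l^2 - x^2) ^ (β+2) * (deriv V x)^2)) ≤ R := by
    intro s hs hms
    calc ∫⁻ x in s, ENNReal.ofReal ((l^2 - x^2) ^ (β+2) * (deriv V x)^2)
        ≤ ∫⁻ x in s, ENNReal.ofReal
            ((l^2 - x^2) ^ γ * (V x)^2 + (l^2 - x^2) ^ (β + 2) * (deriv V x)^2) := by
          apply setLIntegral_mono' hms
          intro x hx
          apply ENNReal.ofReal_le_ofReal
          have hx' := hs hx
          have hw : (0:ℝ) < l^2 - x^2 := by
            have h1 := hx'.1; have h2 := hx'.2; nlinarith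
          have : (0:ℝ) ≤ (l^2 - x^2) ^ γ * (V x)^2 :=
            mul_nonneg (Real.rpow_nonneg hw.le _) (sq_nonneg _)
          linarith
      _ ≤ R := lintegral_mono_set hs
  -- substitution x ↦ -x
  have hnegsub : ∀ F : ℝ → ℝ≥0∞,
      ∫⁻ x in Ioo (-l) 0, F x = ∫⁻ x in Ioo 0 l, F (-x) := by
    intro F
    have hmp : MeasurePreserving (fun x : ℝ => -x) volume volume :=
      Measure.measurePreserving_neg _
    have hemb : MeasurableEmbedding (fun x : ℝ => -x) :=
      (Homeomorph.neg ℝ).measurableEmbedding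
    have hpre : (fun x : ℝ => -x) ⁻¹' (Ioo (-l) 0) = Ioo 0 l := by
      ext x
      simp only [mem_preimage, mem_Ioo]
      constructor
      · rintro ⟨h1, h2⟩; constructor <;> linarith
      · rintro ⟨h1, h2⟩; constructor <;> linarith
    have := hmp.setLIntegral_comp_preimage_emb hemb F (Ioo (-l) 0)
    rw [hpre] at this
    exact this.symm
  -- left half
  set W : ℝ → ℝ := fun x => V (-x) with hW
  have hWc : ContDiff ℝ (⊤ : ℕ∞) W := hV.comp (contDiff_id.neg)
  have hWl : W l = 0 := by simp only [hW]; exact hVml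
  have hWd : ∀ x, deriv W x = -deriv V (-x) := by
    intro x
    exact deriv_comp_neg (f := V) (x := x)
  have hleft : ∫⁻ x in Ioo (-l) 0, ENNReal.ofReal ((l^2 - x^2) ^ β * (V x)^2)
      ≤ ENNReal.ofReal K *
        ∫⁻ x in Ioo (-l) 0, ENNReal.ofReal ((l^2 - x^2) ^ (β+2) * (deriv V x)^2) := by
    rw [hnegsub (fun x => ENNReal.ofReal ((l^2 - x^2) ^ β * (V x)^2)),
      hnegsub (fun x => ENNReal.ofReal ((l^2 - x^2) ^ (β+2) * (deriv V x)^2))]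
    have h1 : ∀ x : ℝ, ENNReal.ofReal ((l^2 - (-x)^2) ^ β * (V (-x))^2)
        = ENNReal.ofReal ((l^2 - x^2) ^ β * (W x)^2) := by
      intro x; rw [hW]; rw [neg_sq]
    have h2 : ∀ x : ℝ, ENNReal.ofReal ((l^2 - (-x)^2) ^ (β+2) * (deriv V (-x))^2)
        = ENNReal.ofReal ((l^2 - x^2) ^ (β+2) * (deriv W x)^2) := by
      intro x; rw [hWd x, neg_sq, neg_pow, neg_pow]; ring_nf
    calc ∫⁻ x in Ioo 0 l, ENNReal.ofReal ((l^2 - (-x)^2) ^ β * (V (-x))^2)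
        = ∫⁻ x in Ioo 0 l, ENNReal.ofReal ((l^2 - x^2) ^ β * (W x)^2) :=
          lintegral_congr fun x => h1 x
      _ ≤ ENNReal.ofReal K *
          ∫⁻ x in Ioo 0 l, ENNReal.ofReal ((l^2 - x^2) ^ (β+2) * (deriv W x)^2) :=
          half_full hl hβ hWc hWl
      _ = ENNReal.ofReal K *
          ∫⁻ x in Ioo 0 l, ENNReal.ofReal ((l^2 - (-x)^2) ^ (β+2) * (deriv V (-x))^2) := by
          rw [lintegral_congr fun x => (h2 x)]
  have hright : ∫⁻ x in Ioo 0 l, ENNReal.ofReal ((l^2 - x^2) ^ β * (V x)^2)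
      ≤ ENNReal.ofReal K *
        ∫⁻ x in Ioo 0 l, ENNReal.ofReal ((l^2 - x^2) ^ (β+2) * (deriv V x)^2) :=
    half_full hl hβ hV hVl
  -- split
  have hsplit : ∫⁻ x in Ioo (-l) l, ENNReal.ofReal ((l^2 - x^2) ^ β * (V x)^2)
      = (∫⁻ x in Ioo (-l) 0, ENNReal.ofReal ((l^2 - x^2) ^ β * (V x)^2))
        + ∫⁻ x in Ioo 0 l, ENNReal.ofReal ((l^2 - x^2) ^ β * (V x)^2) := by
    have hu : Ioo (-l) 0 ∪ Ico 0 l = Ioo (-l) l :=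
      Ioo_union_Ico_eq_Ioo (by linarith) (by linarith)
    have hd : Disjoint (Ioo (-l) (0:ℝ)) (Ico 0 l) := by
      apply Set.disjoint_left.mpr
      rintro x ⟨_, h2⟩ ⟨h3, _⟩
      linarith
    rw [← hu, lintegral_union measurableSet_Ico hd]
    congr 1
    exact setLIntegral_congr Ioo_ae_eq_Ico.symm
  rw [hsplit]
  calc (∫⁻ x in Ioo (-l) 0, ENNReal.ofReal ((l^2 - x^2) ^ β * (V x)^2))
        + ∫⁻ x in Ioo 0 l, ENNReal.ofReal ((l^2 - x^2) ^ β * (V x)^2)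
      ≤ ENNReal.ofReal K * R + ENNReal.ofReal K * R := by
        apply add_le_add
        · exact le_trans hleft (mul_le_mul_right
            (hdom _ (fun x hx => ⟨hx.1, by linarith [hx.2]⟩) measurableSet_Ioo) _)
        · exact le_trans hright (mul_le_mul_right
            (hdom _ (fun x hx => ⟨by linarith [hx.1], hx.2⟩) measurableSet_Ioo) _)
    _ = ENNReal.ofReal (2 * K) * R := by
        rw [ENNReal.ofReal_mul (by norm_num : (0:ℝ) ≤ 2), ENNReal.ofReal_ofNat, two_mul,
          add_mul]
end

section
/- For all V, W ∈ C^∞([-ℓ,ℓ]) the symmetry identity ∫_{-ℓ}^{ℓ} U V (𝓛W) dx = (1/5) ∫_{-ℓ}^{ℓ} U V W dx + ∫_{-ℓ}^{ℓ} Φ V' W' dx + ∫_{-ℓ}^{ℓ} U² V'' W'' dx holds. -/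
open MeasureTheory Set

set_option linter.unusedVariables false

private lemma smooth_deriv {f : ℝ → ℝ} (hf : ContDiff ℝ ((⊤ : ℕ∞) : WithTop ℕ∞) f) : ContDiff ℝ ((⊤ : ℕ∞) : WithTop ℕ∞) (deriv f) :=
  (contDiff_infty_iff_deriv.mp hf).2

private lemma smooth_iteratedDeriv (n : ℕ) {f : ℝ → ℝ} (hf : ContDiff ℝ ((⊤ : ℕ∞) : WithTop ℕ∞) f) :
    ContDiff ℝ ((⊤ : ℕ∞) : WithTop ℕ∞) (iteratedDeriv n f) := by
  induction n generalizing f with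
  | zero => simpa [iteratedDeriv_zero] using hf
  | succ n ih => rw [iteratedDeriv_succ']; exact ih (smooth_deriv hf)

private lemma hda {f : ℝ → ℝ} (hf : ContDiff ℝ ((⊤ : ℕ∞) : WithTop ℕ∞) f) (x : ℝ) :
    HasDerivAt f (deriv f x) x :=
  (hf.differentiable (by norm_num) x).hasDerivAt

private lemma hda_it (n : ℕ) {f : ℝ → ℝ} (hf : ContDiff ℝ ((⊤ : ℕ∞) : WithTop ℕ∞) f) (x : ℝ) :
    HasDerivAt (iteratedDeriv n f) (iteratedDeriv (n+1) f x) x := by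
  rw [iteratedDeriv_succ]
  exact hda (smooth_iteratedDeriv n hf) x

private lemma hda_d {f : ℝ → ℝ} (hf : ContDiff ℝ ((⊤ : ℕ∞) : WithTop ℕ∞) f) (x : ℝ) :
    HasDerivAt (deriv f) (iteratedDeriv 2 f x) x := by
  have := hda_it 1 hf x
  simpa [iteratedDeriv_one] using this

theorem stmt8 (l : ℝ) (hl : 0 < l) (U : ℝ → ℝ) (hU : ContDiff ℝ (⊤ : ℕ∞) U)
    (hUeven : ∀ x : ℝ, U (-x) = U x)
    (hUpos : ∀ x ∈ Set.Ioo (-l) l, 0 < U x)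
    (hUl : U l = 0) (hUml : U (-l) = 0)
    (hU'l : deriv U l = 0) (hU'ml : deriv U (-l) = 0)
    (hU''l : 0 < iteratedDeriv 2 U l) (hU''ml : 0 < iteratedDeriv 2 U (-l))
    (hODE : ∀ x ∈ Set.Ioo (-l) l, iteratedDeriv 3 U x = (U x)^2 * deriv U x + x/5)
    (V W : ℝ → ℝ) (hV : ContDiff ℝ (⊤ : ℕ∞) V) (hW : ContDiff ℝ (⊤ : ℕ∞) W) :
    (∫ x in (-l)..l, U x * V x * opL U W x)
      = (1/5) * (∫ x in (-l)..l, U x * V x * W x)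
        + (∫ x in (-l)..l, Phi U x * deriv V x * deriv W x)
        + (∫ x in (-l)..l, (U x)^2 * iteratedDeriv 2 V x * iteratedDeriv 2 W x) := by
  have hle : -l ≤ l := by linarith
  replace hU : ContDiff ℝ ((⊤ : ℕ∞) : WithTop ℕ∞) U := hU.of_le (by simp)
  replace hV : ContDiff ℝ ((⊤ : ℕ∞) : WithTop ℕ∞) V := hV.of_le (by simp)
  replace hW : ContDiff ℝ ((⊤ : ℕ∞) : WithTop ℕ∞) W := hW.of_le (by simp)
  -- the antiderivative of the difference
  set g : ℝ → ℝ := fun y => (U y)^2 * V y * iteratedDeriv 3 W y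
      - (U y)^2 * deriv V y * iteratedDeriv 2 W y
      + 2 * U y * deriv U y * V y * iteratedDeriv 2 W y
      - Phi U y * V y * deriv W y with hgdef
  set F : ℝ → ℝ := fun y => U y * V y * opL U W y
      - ((1/5) * (U y * V y * W y) + Phi U y * deriv V y * deriv W y
          + (U y)^2 * iteratedDeriv 2 V y * iteratedDeriv 2 W y) with hFdef
  -- continuity facts
  have c0 : Continuous U := hU.continuous
  have c1 : Continuous (deriv U) := (smooth_deriv hU).continuous
  have cU2 : Continuous (iteratedDeriv 2 U) := (smooth_iteratedDeriv 2 hU).continuous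
  have cV0 : Continuous V := hV.continuous
  have cV1 : Continuous (deriv V) := (smooth_deriv hV).continuous
  have cV2 : Continuous (iteratedDeriv 2 V) := (smooth_iteratedDeriv 2 hV).continuous
  have cW0 : Continuous W := hW.continuous
  have cW1 : Continuous (deriv W) := (smooth_deriv hW).continuous
  have cW2 : Continuous (iteratedDeriv 2 W) := (smooth_iteratedDeriv 2 hW).continuous
  have cW3 : Continuous (iteratedDeriv 3 W) := (smooth_iteratedDeriv 3 hW).continuous
  have cW4 : Continuous (iteratedDeriv 4 W) := (smooth_iteratedDeriv 4 hW).continuous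
  have cPhi : Continuous (Phi U) := by
    unfold Phi
    exact ((continuous_const.mul (c1.pow 2)).sub ((continuous_const.mul c0).mul cU2)).add (c0.pow 4)
  have copL : Continuous (opL U W) := by
    unfold opL
    exact ((((c0.mul cW4).add ((continuous_const.mul c1).mul cW3)).add
      (((continuous_const.mul cU2).sub (c0.pow 3)).mul cW2)).add
      ((continuous_const.mul continuous_id).mul cW1)).add (cW0.div_const 5)
  have cA : Continuous (fun y => U y * V y * opL U W y) := (c0.mul cV0).mul copL
  have cB1 : Continuous (fun y => U y * V y * W y) := (c0.mul cV0).mul cW0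
  have cB2 : Continuous (fun y => Phi U y * deriv V y * deriv W y) := (cPhi.mul cV1).mul cW1
  have cB3 : Continuous (fun y => (U y)^2 * iteratedDeriv 2 V y * iteratedDeriv 2 W y) :=
    ((c0.pow 2).mul cV2).mul cW2
  have cF : Continuous F := by
    rw [hFdef]
    exact cA.sub (((continuous_const.mul cB1).add cB2).add cB3)
  have cg : Continuous g := by
    rw [hgdef]
    exact ((((((c0.pow 2).mul cV0).mul cW3).sub (((c0.pow 2).mul cV1).mul cW2)).add
      ((((continuous_const.mul c0).mul c1).mul cV0).mul cW2)).sub ((cPhi.mul cV0).mul cW1))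
  -- the derivative identity on the open interval
  have key : ∀ x ∈ Ioo (-l) l, HasDerivAt g (F x) x := by
    intro x hx
    have hUx := hda hU x
    have hU2x := hda_d hU x
    have hU3x : HasDerivAt (iteratedDeriv 2 U) (iteratedDeriv 3 U x) x := hda_it 2 hU x
    have hVx := hda hV x
    have hV2x := hda_d hV x
    have hWx := hda hW x
    have hW2x := hda_d hW x
    have hW3x : HasDerivAt (iteratedDeriv 2 W) (iteratedDeriv 3 W x) x := hda_it 2 hW x
    have hW4x : HasDerivAt (iteratedDeriv 3 W) (iteratedDeriv 4 W x) x := hda_it 3 hW x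
    have H1 := ((hUx.pow 2).mul hVx).mul hW4x
    have H2 := ((hUx.pow 2).mul hV2x).mul hW3x
    have H3 := (((hUx.const_mul 2).mul hU2x).mul hVx).mul hW3x
    have HPhi : HasDerivAt (Phi U)
        ((2:ℝ) * ((2:ℕ) * deriv U x ^ (2-1) * iteratedDeriv 2 U x)
          - ((4 * deriv U x) * iteratedDeriv 2 U x + (4 * U x) * iteratedDeriv 3 U x)
          + (4:ℕ) * U x ^ (4-1) * deriv U x) x :=
      (((hU2x.pow 2).const_mul 2).sub ((hUx.const_mul 4).mul hU3x)).add (hUx.pow 4)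
    have Hg := ((H1.sub H2).add H3).sub ((HPhi.mul hVx).mul hW2x)
    rw [hgdef]
    convert Hg using 1
    any_goals with_reducible_and_instances rfl
    rw [hFdef]
    simp only [opL, Phi, Pi.mul_apply, Pi.pow_apply]
    rw [hODE x hx]
    push_cast
    ring
  -- FTC
  have hint : IntervalIntegrable F volume (-l) l := cF.intervalIntegrable _ _
  have hFTC := intervalIntegral.integral_eq_sub_of_hasDeriv_right_of_le hle
    cg.continuousOn (fun x hx => (key x hx).hasDerivWithinAt) hint
  have hgl : g l = 0 := by
    rw [hgdef]; simp only [Phi]; rw [hUl, hU'l]; ring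
  have hgml : g (-l) = 0 := by
    rw [hgdef]; simp only [Phi]; rw [hUml, hU'ml]; ring
  rw [hgl, hgml, sub_zero] at hFTC
  rw [hFdef] at hFTC
  simp only at hFTC
  have iA : IntervalIntegrable (fun y => U y * V y * opL U W y) volume (-l) l :=
    cA.intervalIntegrable (-l) l
  have iB1 : IntervalIntegrable (fun y => (1/5) * (U y * V y * W y)) volume (-l) l :=
    (continuous_const.mul cB1).intervalIntegrable (-l) l
  have iB2 : IntervalIntegrable (fun y => Phi U y * deriv V y * deriv W y) volume (-l) l :=
    cB2.intervalIntegrable (-l) l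
  have iB3 : IntervalIntegrable (fun y => (U y)^2 * iteratedDeriv 2 V y * iteratedDeriv 2 W y) volume (-l) l :=
    cB3.intervalIntegrable (-l) l
  rw [intervalIntegral.integral_sub iA ((iB1.add iB2).add iB3),
    intervalIntegral.integral_add (iB1.add iB2) iB3,
    intervalIntegral.integral_add iB1 iB2,
    intervalIntegral.integral_const_mul] at hFTC
  linarith
end

section
/- Let k ∈ ℕ₀ and 0 < λ < ∞, and let V, V⁰, F ∈ C^∞([-ℓ,ℓ]) satisfy the resolvent equation λV + 𝓛V = λV⁰ + F on (-ℓ,ℓ). If k is even, then λ |𝓛^{k/2}V|_{U,2}² + |𝓛^{k/2+1}V|_U² ≤ λ |𝓛^{k/2}V⁰|_{U,2}² + |𝓛^{k/2}F|_U²; if k is odd, then λ |𝓛^{(k+1)/2}V|_U² + |𝓛^{(k+1)/2}V|_{U,2}² ≤ λ |𝓛^{(k+1)/2}V⁰|_U² + |𝓛^{(k-1)/2}F|_{U,2}². Here 𝓛^m denotes the m-fold iterate of 𝓛 on C^∞([-ℓ,ℓ]). -/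
open MeasureTheory Set
open scoped ContDiff

set_option linter.unusedVariables false

namespace S12

lemma cdIter {f : ℝ → ℝ} (hf : ContDiff ℝ ∞ f) (n : ℕ) : ContDiff ℝ ∞ (iteratedDeriv n f) := by
  rw [iteratedDeriv_eq_iterate]; exact hf.iterate_deriv n

lemma contIter {f : ℝ → ℝ} (hf : ContDiff ℝ ∞ f) (n : ℕ) : Continuous (iteratedDeriv n f) :=
  (cdIter hf n).continuous

lemma contDeriv {f : ℝ → ℝ} (hf : ContDiff ℝ ∞ f) : Continuous (deriv f) := by
  rw [← iteratedDeriv_one]; exact contIter hf 1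

lemma hdIter {f : ℝ → ℝ} (hf : ContDiff ℝ ∞ f) (n : ℕ) (x : ℝ) :
    HasDerivAt (iteratedDeriv n f) (iteratedDeriv (n+1) f x) x := by
  have h : DifferentiableAt ℝ (iteratedDeriv n f) x :=
    ((cdIter hf n).differentiable (by simp)).differentiableAt
  rw [iteratedDeriv_succ]
  exact h.hasDerivAt

lemma hd0 {f : ℝ → ℝ} (hf : ContDiff ℝ ∞ f) (x : ℝ) :
    HasDerivAt f (deriv f x) x := by
  have := hdIter hf 0 x
  rw [iteratedDeriv_zero] at this
  rwa [← iteratedDeriv_one]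

lemma hd1 {f : ℝ → ℝ} (hf : ContDiff ℝ ∞ f) (x : ℝ) :
    HasDerivAt (deriv f) (iteratedDeriv 2 f x) x := by
  have := hdIter hf 1 x
  rwa [iteratedDeriv_one] at this

lemma cdOpL {U V : ℝ → ℝ} (hU : ContDiff ℝ ∞ U) (hV : ContDiff ℝ ∞ V) :
    ContDiff ℝ ∞ (opL U V) := by
  unfold opL
  exact ((((hU.mul (cdIter hV 4)).add
      ((contDiff_const.mul ((iteratedDeriv_one (f := U)) ▸ cdIter hU 1)).mul (cdIter hV 3))).add
      (((contDiff_const.mul (cdIter hU 2)).sub (hU.pow 3)).mul (cdIter hV 2))).add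
      ((contDiff_const.mul contDiff_id).mul ((iteratedDeriv_one (f := V)) ▸ cdIter hV 1))).add
      (hV.div_const 5)

lemma contOpL {U V : ℝ → ℝ} (hU : ContDiff ℝ ∞ U) (hV : ContDiff ℝ ∞ V) :
    Continuous (opL U V) := (cdOpL hU hV).continuous

lemma eqOn_iteratedDeriv {f g : ℝ → ℝ} {s : Set ℝ} (hs : IsOpen s) (h : EqOn f g s) (n : ℕ) :
    EqOn (iteratedDeriv n f) (iteratedDeriv n g) s := by
  induction n with
  | zero => simpa [iteratedDeriv_zero] using h
  | succ n ih =>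
    intro x hx
    rw [iteratedDeriv_succ, iteratedDeriv_succ]
    exact Filter.EventuallyEq.deriv_eq (Filter.eventuallyEq_of_mem (hs.mem_nhds hx) ih)

lemma eqOn_opL {U f g : ℝ → ℝ} {s : Set ℝ} (hs : IsOpen s) (h : EqOn f g s) :
    EqOn (opL U f) (opL U g) s := by
  intro x hx
  have h1 := eqOn_iteratedDeriv hs h 1 hx
  rw [iteratedDeriv_one, iteratedDeriv_one] at h1
  simp only [opL, eqOn_iteratedDeriv hs h 4 hx, eqOn_iteratedDeriv hs h 3 hx,
    eqOn_iteratedDeriv hs h 2 hx, h1, h hx]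

lemma iterDeriv_lin {f g : ℝ → ℝ} (c : ℝ) (hf : ContDiff ℝ ∞ f) (hg : ContDiff ℝ ∞ g)
    (n : ℕ) (x : ℝ) :
    iteratedDeriv n (fun y => c * f y + g y) x
      = c * iteratedDeriv n f x + iteratedDeriv n g x := by
  have hf' : ContDiffOn ℝ n f univ := (hf.of_le (by exact_mod_cast le_top)).contDiffOn
  have hg' : ContDiffOn ℝ n g univ := (hg.of_le (by exact_mod_cast le_top)).contDiffOn
  have h1 : (fun y => c * f y + g y) = ((fun y => c * f y) + g) := rfl
  rw [h1, ← iteratedDerivWithin_univ,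
    iteratedDerivWithin_add (mem_univ x) uniqueDiffOn_univ
      (ContDiffOn.mul contDiffOn_const hf' x (mem_univ x)) (hg' x (mem_univ x)),
    iteratedDerivWithin_const_mul (mem_univ x) uniqueDiffOn_univ c (hf' x (mem_univ x)),
    iteratedDerivWithin_univ, iteratedDerivWithin_univ]

lemma opL_lin {U f g : ℝ → ℝ} (c : ℝ) (hf : ContDiff ℝ ∞ f) (hg : ContDiff ℝ ∞ g) (x : ℝ) :
    opL U (fun y => c * f y + g y) x = c * opL U f x + opL U g x := by
  have h1 := iterDeriv_lin c hf hg 1 x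
  rw [iteratedDeriv_one, iteratedDeriv_one, iteratedDeriv_one] at h1
  simp only [opL, iterDeriv_lin c hf hg 4 x, iterDeriv_lin c hf hg 3 x,
    iterDeriv_lin c hf hg 2 x, h1]
  ring

lemma key (l : ℝ) (hl : 0 < l) (U : ℝ → ℝ) (hU : ContDiff ℝ ∞ U)
    (hUl : U l = 0) (hUml : U (-l) = 0)
    (hU'l : deriv U l = 0) (hU'ml : deriv U (-l) = 0)
    (hODE : ∀ x ∈ Set.Ioo (-l) l, iteratedDeriv 3 U x = (U x)^2 * deriv U x + x/5)
    (A B : ℝ → ℝ) (hA : ContDiff ℝ ∞ A) (hB : ContDiff ℝ ∞ B) :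
    ∫ x in (-l)..l, U x * A x * opL U B x
      = (∫ x in (-l)..l, (U x)^2 * (iteratedDeriv 2 A x * iteratedDeriv 2 B x))
        + (∫ x in (-l)..l, Phi U x * (deriv A x * deriv B x))
        + (1/5) * ∫ x in (-l)..l, U x * (A x * B x) := by
  set Ψ : ℝ → ℝ := fun y => (U y)^2 * A y * iteratedDeriv 3 B y
      + (2 * U y * deriv U y * A y - (U y)^2 * deriv A y) * iteratedDeriv 2 B y
      - (2 * (deriv U y)^2 - 4 * U y * iteratedDeriv 2 U y + (U y)^4) * (A y * deriv B y)
    with hPsidef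
  set g : ℝ → ℝ := fun y => U y * A y * opL U B y
      - (U y)^2 * (iteratedDeriv 2 A y * iteratedDeriv 2 B y)
      - Phi U y * (deriv A y * deriv B y)
      - 1/5 * (U y * (A y * B y)) with hgdef
  have cU : Continuous U := hU.continuous
  have cU1 : Continuous (deriv U) := contDeriv hU
  have cU2 : Continuous (iteratedDeriv 2 U) := contIter hU 2
  have cA : Continuous A := hA.continuous
  have cA1 : Continuous (deriv A) := contDeriv hA
  have cA2 : Continuous (iteratedDeriv 2 A) := contIter hA 2
  have cB : Continuous B := hB.continuous
  have cB1 : Continuous (deriv B) := contDeriv hB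
  have cB2 : Continuous (iteratedDeriv 2 B) := contIter hB 2
  have cB3 : Continuous (iteratedDeriv 3 B) := contIter hB 3
  have cB4 : Continuous (iteratedDeriv 4 B) := contIter hB 4
  have cOp : Continuous (opL U B) := contOpL hU hB
  have cPhi : Continuous (Phi U) := by unfold Phi; fun_prop
  have hderiv : ∀ x ∈ Ioo (-l) l, HasDerivAt Ψ (g x) x := by
    intro x hx
    have h0U := hd0 hU x
    have h1U := hd1 hU x
    have h2U := hdIter hU 2 x
    have h0A := hd0 hA x
    have h1A := hd1 hA x
    have h0B := hd0 hB x
    have h1B := hd1 hB x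
    have h2B := hdIter hB 2 x
    have h3B := hdIter hB 3 x
    have H := ((((h0U.pow 2).mul h0A).mul h3B).add
        (((((h0U.const_mul 2).mul h1U).mul h0A).sub ((h0U.pow 2).mul h1A)).mul h2B)).sub
        (((((h1U.pow 2).const_mul 2).sub ((h0U.const_mul 4).mul h2U)).add (h0U.pow 4)).mul
          (h0A.mul h1B))
    refine H.congr_deriv ?_
    simp only [hgdef, opL, Phi, Pi.mul_apply, Pi.pow_apply, Pi.add_apply, Pi.sub_apply]
    rw [hODE x hx]
    ring
  have hPsic : Continuous Ψ := by rw [hPsidef]; fun_prop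
  have hgc : Continuous g := by rw [hgdef]; unfold opL Phi; fun_prop
  have hFTC := intervalIntegral.integral_eq_sub_of_hasDerivAt_of_le (by linarith : -l ≤ l)
      hPsic.continuousOn hderiv (hgc.intervalIntegrable _ _)
  have hPsil : Ψ l = 0 := by simp only [hPsidef, hUl, hU'l]; ring
  have hPsiml : Ψ (-l) = 0 := by simp only [hPsidef, hUml, hU'ml]; ring
  have hg0 : ∫ y in (-l)..l, g y = 0 := by rw [hFTC, hPsil, hPsiml]; ring
  have i1 : IntervalIntegrable (fun y => U y * A y * opL U B y) volume (-l) l :=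
    (by fun_prop : Continuous (fun y => U y * A y * opL U B y)).intervalIntegrable _ _
  have i2 : IntervalIntegrable (fun y => (U y)^2 * (iteratedDeriv 2 A y * iteratedDeriv 2 B y)) volume (-l) l :=
    (by fun_prop : Continuous (fun y => (U y)^2 * (iteratedDeriv 2 A y * iteratedDeriv 2 B y))).intervalIntegrable _ _
  have i3 : IntervalIntegrable (fun y => Phi U y * (deriv A y * deriv B y)) volume (-l) l :=
    (by fun_prop : Continuous (fun y => Phi U y * (deriv A y * deriv B y))).intervalIntegrable _ _
  have i4 : IntervalIntegrable (fun y => 1/5 * (U y * (A y * B y))) volume (-l) l :=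
    (by fun_prop : Continuous (fun y => 1/5 * (U y * (A y * B y)))).intervalIntegrable _ _
  have hsplit : ∫ y in (-l)..l, g y
      = (∫ y in (-l)..l, U y * A y * opL U B y)
        - (∫ y in (-l)..l, (U y)^2 * (iteratedDeriv 2 A y * iteratedDeriv 2 B y))
        - (∫ y in (-l)..l, Phi U y * (deriv A y * deriv B y))
        - ∫ y in (-l)..l, 1/5 * (U y * (A y * B y)) := by
    simp only [hgdef]
    rw [intervalIntegral.integral_sub ((i1.sub i2).sub i3) i4,
      intervalIntegral.integral_sub (i1.sub i2) i3,
      intervalIntegral.integral_sub i1 i2]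
  rw [hsplit, intervalIntegral.integral_const_mul] at hg0
  linarith

lemma U_nonneg (l : ℝ) (U : ℝ → ℝ) (hUpos : ∀ x ∈ Set.Ioo (-l) l, 0 < U x)
    (hUl : U l = 0) (hUml : U (-l) = 0) :
    ∀ x ∈ Icc (-l) l, 0 ≤ U x := by
  intro x hx
  rcases hx.1.eq_or_lt with h1 | h1
  · rw [← h1, hUml]
  rcases hx.2.eq_or_lt with h2 | h2
  · rw [h2, hUl]
  exact (hUpos x ⟨h1, h2⟩).le

lemma Phi_hasDeriv (l : ℝ) (U : ℝ → ℝ) (hU : ContDiff ℝ ∞ U)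
    (hODE : ∀ x ∈ Set.Ioo (-l) l, iteratedDeriv 3 U x = (U x)^2 * deriv U x + x/5) :
    ∀ x ∈ Ioo (-l) l, HasDerivAt (Phi U) (-(4/5) * (x * U x)) x := by
  intro x hx
  have h0U := hd0 hU x
  have h1U := hd1 hU x
  have h2U := hdIter hU 2 x
  have H := (((h1U.pow 2).const_mul 2).sub ((h0U.const_mul 4).mul h2U)).add (h0U.pow 4)
  have hPhi : Phi U = fun y => 2 * (deriv U y)^2 - 4 * U y * iteratedDeriv 2 U y + (U y)^4 := rfl
  rw [hPhi]
  refine H.congr_deriv ?_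
  rw [hODE x hx]
  ring

lemma Phi_nonneg (l : ℝ) (hl : 0 < l) (U : ℝ → ℝ) (hU : ContDiff ℝ ∞ U)
    (hUpos : ∀ x ∈ Set.Ioo (-l) l, 0 < U x)
    (hUl : U l = 0) (hUml : U (-l) = 0)
    (hU'l : deriv U l = 0) (hU'ml : deriv U (-l) = 0)
    (hODE : ∀ x ∈ Set.Ioo (-l) l, iteratedDeriv 3 U x = (U x)^2 * deriv U x + x/5) :
    ∀ x ∈ Icc (-l) l, 0 ≤ Phi U x := by
  have cPhi : Continuous (Phi U) := by
    have cU : Continuous U := hU.continuous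
    have cU1 : Continuous (deriv U) := contDeriv hU
    have cU2 : Continuous (iteratedDeriv 2 U) := contIter hU 2
    unfold Phi; fun_prop
  have hPl : Phi U l = 0 := by simp only [Phi, hUl, hU'l]; ring
  have hPml : Phi U (-l) = 0 := by simp only [Phi, hUml, hU'ml]; ring
  have hanti : AntitoneOn (Phi U) (Icc 0 l) := by
    apply antitoneOn_of_deriv_nonpos (convex_Icc 0 l) cPhi.continuousOn
    · intro x hx
      rw [interior_Icc] at hx
      have hx' : x ∈ Ioo (-l) l := ⟨by linarith [hx.1], hx.2⟩
      exact ((Phi_hasDeriv l U hU hODE x hx').differentiableAt).differentiableWithinAt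
    · intro x hx
      rw [interior_Icc] at hx
      have hx' : x ∈ Ioo (-l) l := ⟨by linarith [hx.1], hx.2⟩
      rw [(Phi_hasDeriv l U hU hODE x hx').deriv]
      nlinarith [hUpos x hx', hx.1]
  have hmono : MonotoneOn (Phi U) (Icc (-l) 0) := by
    apply monotoneOn_of_deriv_nonneg (convex_Icc (-l) 0) cPhi.continuousOn
    · intro x hx
      rw [interior_Icc] at hx
      have hx' : x ∈ Ioo (-l) l := ⟨hx.1, by linarith [hx.2]⟩
      exact ((Phi_hasDeriv l U hU hODE x hx').differentiableAt).differentiableWithinAt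
    · intro x hx
      rw [interior_Icc] at hx
      have hx' : x ∈ Ioo (-l) l := ⟨hx.1, by linarith [hx.2]⟩
      rw [(Phi_hasDeriv l U hU hODE x hx').deriv]
      nlinarith [hUpos x hx', hx.2]
  intro x hx
  rcases le_total x 0 with h | h
  · calc (0:ℝ) = Phi U (-l) := hPml.symm
      _ ≤ Phi U x := hmono ⟨le_rfl, by linarith⟩ ⟨hx.1, h⟩ hx.1
  · calc (0:ℝ) = Phi U l := hPl.symm
      _ ≤ Phi U x := hanti ⟨h, hx.2⟩ ⟨by linarith, le_rfl⟩ hx.2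

lemma int_cs {a b : ℝ} (hab : a ≤ b) {c f g : ℝ → ℝ} (hc : Continuous c) (hf : Continuous f)
    (hg : Continuous g) (hc0 : ∀ x ∈ Icc a b, 0 ≤ c x) :
    2 * ∫ x in a..b, c x * (f x * g x)
      ≤ (∫ x in a..b, c x * (f x)^2) + ∫ x in a..b, c x * (g x)^2 := by
  have h1 : 2 * ∫ x in a..b, c x * (f x * g x) = ∫ x in a..b, 2 * (c x * (f x * g x)) :=
    (intervalIntegral.integral_const_mul 2 _).symm
  have h2 : (∫ x in a..b, c x * (f x)^2) + ∫ x in a..b, c x * (g x)^2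
      = ∫ x in a..b, (c x * (f x)^2 + c x * (g x)^2) :=
    (intervalIntegral.integral_add
      ((by fun_prop : Continuous (fun x => c x * (f x)^2)).intervalIntegrable _ _)
      ((by fun_prop : Continuous (fun x => c x * (g x)^2)).intervalIntegrable _ _)).symm
  rw [h1, h2]
  apply intervalIntegral.integral_mono_on hab
    ((by fun_prop : Continuous (fun x => 2 * (c x * (f x * g x)))).intervalIntegrable _ _)
    ((by fun_prop : Continuous (fun x => c x * (f x)^2 + c x * (g x)^2)).intervalIntegrable _ _)
  intro x hx
  nlinarith [hc0 x hx, sq_nonneg (f x - g x)]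

lemma int_sq (a b : ℝ) (c f : ℝ → ℝ) :
    (∫ x in a..b, c x * (f x * f x)) = ∫ x in a..b, c x * (f x)^2 := by
  apply intervalIntegral.integral_congr
  intro x hx
  show c x * (f x * f x) = c x * (f x)^2
  ring

lemma coreEven (l : ℝ) (hl : 0 < l) (U : ℝ → ℝ) (hU : ContDiff ℝ ∞ U)
    (hUpos : ∀ x ∈ Set.Ioo (-l) l, 0 < U x)
    (hUl : U l = 0) (hUml : U (-l) = 0)
    (hU'l : deriv U l = 0) (hU'ml : deriv U (-l) = 0)
    (hODE : ∀ x ∈ Set.Ioo (-l) l, iteratedDeriv 3 U x = (U x)^2 * deriv U x + x/5)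
    (lam : ℝ) (hlam : 0 < lam) (W W0 G : ℝ → ℝ)
    (hW : ContDiff ℝ ∞ W) (hW0 : ContDiff ℝ ∞ W0) (hG : ContDiff ℝ ∞ G)
    (hEq : ∀ x ∈ Set.Ioo (-l) l, lam * W x + opL U W x = lam * W0 x + G x) :
    lam * u2Sq l U W + uSq l U (opL U W) ≤ lam * u2Sq l U W0 + uSq l U G := by
  have hab : (-l) ≤ l := by linarith
  have cU : Continuous U := hU.continuous
  have cPhi : Continuous (Phi U) := by
    have := contDeriv hU; have := contIter hU 2; unfold Phi; fun_prop
  have cW : Continuous W := hW.continuous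
  have cW0 : Continuous W0 := hW0.continuous
  have cG : Continuous G := hG.continuous
  have cT : Continuous (opL U W) := contOpL hU hW
  have c1W : Continuous (deriv W) := contDeriv hW
  have c2W : Continuous (iteratedDeriv 2 W) := contIter hW 2
  have c1W0 : Continuous (deriv W0) := contDeriv hW0
  have c2W0 : Continuous (iteratedDeriv 2 W0) := contIter hW0 2
  have hUnn := U_nonneg l U hUpos hUl hUml
  have hPnn := Phi_nonneg l hl U hU hUpos hUl hUml hU'l hU'ml hODE
  -- integral form of the equation, tested against U * opL U W
  have hIeq : ∫ x in (-l)..l, U x * opL U W x * (lam * W x + opL U W x)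
      = ∫ x in (-l)..l, U x * opL U W x * (lam * W0 x + G x) := by
    apply intervalIntegral.integral_congr
    intro x hx
    rw [uIcc_of_le hab] at hx
    have hEqc : EqOn (fun y => lam * W y + opL U W y) (fun y => lam * W0 y + G y)
        (Icc (-l) l) := by
      have h0 : EqOn (fun y => lam * W y + opL U W y) (fun y => lam * W0 y + G y)
          (Ioo (-l) l) := fun y hy => hEq y hy
      have h1 := h0.closure (by fun_prop) (by fun_prop)
      rwa [closure_Ioo (by linarith : (-l) ≠ l)] at h1
    have := hEqc hx
    simp only at this
    show U x * opL U W x * (lam * W x + opL U W x) = U x * opL U W x * (lam * W0 x + G x)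
    rw [this]
  have eL : ∫ x in (-l)..l, U x * opL U W x * (lam * W x + opL U W x)
      = lam * (∫ x in (-l)..l, U x * W x * opL U W x)
        + ∫ x in (-l)..l, U x * (opL U W x * opL U W x) := by
    rw [← intervalIntegral.integral_const_mul,
      ← intervalIntegral.integral_add
        ((by fun_prop : Continuous (fun x => lam * (U x * W x * opL U W x))).intervalIntegrable _ _)
        ((by fun_prop : Continuous (fun x => U x * (opL U W x * opL U W x))).intervalIntegrable _ _)]
    apply intervalIntegral.integral_congr
    intro x hx
    show U x * opL U W x * (lam * W x + opL U W x)
      = lam * (U x * W x * opL U W x) + U x * (opL U W x * opL U W x)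
    ring
  have eR : ∫ x in (-l)..l, U x * opL U W x * (lam * W0 x + G x)
      = lam * (∫ x in (-l)..l, U x * W0 x * opL U W x)
        + ∫ x in (-l)..l, U x * (G x * opL U W x) := by
    rw [← intervalIntegral.integral_const_mul,
      ← intervalIntegral.integral_add
        ((by fun_prop : Continuous (fun x => lam * (U x * W0 x * opL U W x))).intervalIntegrable _ _)
        ((by fun_prop : Continuous (fun x => U x * (G x * opL U W x))).intervalIntegrable _ _)]
    apply intervalIntegral.integral_congr
    intro x hx
    show U x * opL U W x * (lam * W0 x + G x)
      = lam * (U x * W0 x * opL U W x) + U x * (G x * opL U W x)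
    ring
  have kWW := key l hl U hU hUl hUml hU'l hU'ml hODE W W hW hW
  have kW0W := key l hl U hU hUl hUml hU'l hU'ml hODE W0 W hW0 hW
  rw [int_sq, int_sq, int_sq] at kWW
  -- Cauchy-Schwarz bounds
  have c2 := int_cs hab (by fun_prop : Continuous (fun x => (U x)^2)) c2W0 c2W
    (fun x _ => sq_nonneg _)
  have c1 := int_cs hab cPhi c1W0 c1W hPnn
  have c0 := int_cs hab cU cW0 cW hUnn
  have cGT := int_cs hab cU cG cT hUnn
  -- express the W0-W cross term integrals in kW0W shape
  have eCross : ∫ x in (-l)..l, U x * W0 x * opL U W x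
      = (∫ x in (-l)..l, (U x)^2 * (iteratedDeriv 2 W0 x * iteratedDeriv 2 W x))
        + (∫ x in (-l)..l, Phi U x * (deriv W0 x * deriv W x))
        + (1/5) * ∫ x in (-l)..l, U x * (W0 x * W x) := kW0W
  rw [eL, eR, kWW, eCross] at hIeq
  rw [int_sq] at hIeq
  have hgoal : lam * u2Sq l U W + uSq l U (opL U W) ≤ lam * u2Sq l U W0 + uSq l U G := by
    have hm : lam * ((∫ x in (-l)..l, (U x)^2 * (iteratedDeriv 2 W0 x * iteratedDeriv 2 W x))
        + (∫ x in (-l)..l, Phi U x * (deriv W0 x * deriv W x))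
        + (1/5) * ∫ x in (-l)..l, U x * (W0 x * W x))
        ≤ lam * (1/2 * ((∫ x in (-l)..l, (U x)^2 * (iteratedDeriv 2 W0 x)^2)
            + (∫ x in (-l)..l, (U x)^2 * (iteratedDeriv 2 W x)^2)
            + (∫ x in (-l)..l, Phi U x * (deriv W0 x)^2)
            + (∫ x in (-l)..l, Phi U x * (deriv W x)^2)
            + (1/5) * ((∫ x in (-l)..l, U x * (W0 x)^2) + ∫ x in (-l)..l, U x * (W x)^2))) := by
      apply mul_le_mul_of_nonneg_left _ hlam.le
      linarith
    simp only [u2Sq, uSq]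
    nlinarith [hIeq, hm, cGT]
  exact hgoal

lemma coreOdd (l : ℝ) (hl : 0 < l) (U : ℝ → ℝ) (hU : ContDiff ℝ ∞ U)
    (hUpos : ∀ x ∈ Set.Ioo (-l) l, 0 < U x)
    (hUl : U l = 0) (hUml : U (-l) = 0)
    (hU'l : deriv U l = 0) (hU'ml : deriv U (-l) = 0)
    (hODE : ∀ x ∈ Set.Ioo (-l) l, iteratedDeriv 3 U x = (U x)^2 * deriv U x + x/5)
    (lam : ℝ) (hlam : 0 < lam) (T T0 G : ℝ → ℝ)
    (hT : ContDiff ℝ ∞ T) (hT0 : ContDiff ℝ ∞ T0) (hG : ContDiff ℝ ∞ G)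
    (hEq : ∀ x ∈ Set.Ioo (-l) l, lam * T x + opL U T x = lam * T0 x + opL U G x) :
    lam * uSq l U T + u2Sq l U T ≤ lam * uSq l U T0 + u2Sq l U G := by
  have hab : (-l) ≤ l := by linarith
  have cU : Continuous U := hU.continuous
  have cPhi : Continuous (Phi U) := by
    have := contDeriv hU; have := contIter hU 2; unfold Phi; fun_prop
  have cT : Continuous T := hT.continuous
  have cT0 : Continuous T0 := hT0.continuous
  have cG : Continuous G := hG.continuous
  have cLT : Continuous (opL U T) := contOpL hU hT
  have cLG : Continuous (opL U G) := contOpL hU hG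
  have c1T : Continuous (deriv T) := contDeriv hT
  have c2T : Continuous (iteratedDeriv 2 T) := contIter hT 2
  have c1G : Continuous (deriv G) := contDeriv hG
  have c2G : Continuous (iteratedDeriv 2 G) := contIter hG 2
  have hUnn := U_nonneg l U hUpos hUl hUml
  have hPnn := Phi_nonneg l hl U hU hUpos hUl hUml hU'l hU'ml hODE
  have hIeq : ∫ x in (-l)..l, U x * T x * (lam * T x + opL U T x)
      = ∫ x in (-l)..l, U x * T x * (lam * T0 x + opL U G x) := by
    apply intervalIntegral.integral_congr
    intro x hx
    rw [uIcc_of_le hab] at hx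
    have hEqc : EqOn (fun y => lam * T y + opL U T y) (fun y => lam * T0 y + opL U G y)
        (Icc (-l) l) := by
      have h0 : EqOn (fun y => lam * T y + opL U T y) (fun y => lam * T0 y + opL U G y)
          (Ioo (-l) l) := fun y hy => hEq y hy
      have h1 := h0.closure (by fun_prop) (by fun_prop)
      rwa [closure_Ioo (by linarith : (-l) ≠ l)] at h1
    have := hEqc hx
    simp only at this
    show U x * T x * (lam * T x + opL U T x) = U x * T x * (lam * T0 x + opL U G x)
    rw [this]
  have eL : ∫ x in (-l)..l, U x * T x * (lam * T x + opL U T x)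
      = lam * (∫ x in (-l)..l, U x * (T x * T x))
        + ∫ x in (-l)..l, U x * T x * opL U T x := by
    rw [← intervalIntegral.integral_const_mul,
      ← intervalIntegral.integral_add
        ((by fun_prop : Continuous (fun x => lam * (U x * (T x * T x)))).intervalIntegrable _ _)
        ((by fun_prop : Continuous (fun x => U x * T x * opL U T x)).intervalIntegrable _ _)]
    apply intervalIntegral.integral_congr
    intro x hx
    show U x * T x * (lam * T x + opL U T x)
      = lam * (U x * (T x * T x)) + U x * T x * opL U T x
    ring
  have eR : ∫ x in (-l)..l, U x * T x * (lam * T0 x + opL U G x)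
      = lam * (∫ x in (-l)..l, U x * (T0 x * T x))
        + ∫ x in (-l)..l, U x * T x * opL U G x := by
    rw [← intervalIntegral.integral_const_mul,
      ← intervalIntegral.integral_add
        ((by fun_prop : Continuous (fun x => lam * (U x * (T0 x * T x)))).intervalIntegrable _ _)
        ((by fun_prop : Continuous (fun x => U x * T x * opL U G x)).intervalIntegrable _ _)]
    apply intervalIntegral.integral_congr
    intro x hx
    show U x * T x * (lam * T0 x + opL U G x)
      = lam * (U x * (T0 x * T x)) + U x * T x * opL U G x
    ring
  have kTT := key l hl U hU hUl hUml hU'l hU'ml hODE T T hT hT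
  have kTG := key l hl U hU hUl hUml hU'l hU'ml hODE T G hT hG
  rw [int_sq, int_sq, int_sq] at kTT
  have c0 := int_cs hab cU cT0 cT hUnn
  have cs2 := int_cs hab (by fun_prop : Continuous (fun x => (U x)^2)) c2T c2G
    (fun x _ => sq_nonneg _)
  have cs1 := int_cs hab cPhi c1T c1G hPnn
  have cs0 := int_cs hab cU cT cG hUnn
  rw [eL, eR, int_sq] at hIeq
  rw [kTT, kTG] at hIeq
  simp only [uSq, u2Sq]
  have hm : lam * (∫ x in (-l)..l, U x * (T0 x * T x))
      ≤ lam * (1/2 * ((∫ x in (-l)..l, U x * (T0 x)^2) + ∫ x in (-l)..l, U x * (T x)^2)) := by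
    apply mul_le_mul_of_nonneg_left _ hlam.le
    linarith
  nlinarith [hIeq, hm, cs2, cs1, cs0]

lemma cdIterOpL {U : ℝ → ℝ} (hU : ContDiff ℝ ∞ U) {f : ℝ → ℝ} (hf : ContDiff ℝ ∞ f) :
    ∀ n : ℕ, ContDiff ℝ ∞ ((opL U)^[n] f)
  | 0 => hf
  | (n+1) => by
      rw [Function.iterate_succ_apply']
      exact cdOpL hU (cdIterOpL hU hf n)

lemma eqIter (l : ℝ) {U : ℝ → ℝ} (hU : ContDiff ℝ ∞ U) (lam : ℝ)
    {V V0 F : ℝ → ℝ} (hV : ContDiff ℝ ∞ V) (hV0 : ContDiff ℝ ∞ V0) (hF : ContDiff ℝ ∞ F)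
    (heq : ∀ x ∈ Set.Ioo (-l) l, lam * V x + opL U V x = lam * V0 x + F x) :
    ∀ n : ℕ, ∀ x ∈ Set.Ioo (-l) l,
      lam * (opL U)^[n] V x + opL U ((opL U)^[n] V) x
        = lam * (opL U)^[n] V0 x + (opL U)^[n] F x := by
  intro n
  induction n with
  | zero => simpa using heq
  | succ n ih =>
    intro x hx
    have hVn := cdIterOpL hU hV n
    have hV0n := cdIterOpL hU hV0 n
    have hFn := cdIterOpL hU hF n
    have hEqOn : EqOn (fun y => lam * (opL U)^[n] V y + opL U ((opL U)^[n] V) y)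
        (fun y => lam * (opL U)^[n] V0 y + (opL U)^[n] F y) (Ioo (-l) l) :=
      fun y hy => ih y hy
    have h2 := eqOn_opL (U := U) isOpen_Ioo hEqOn hx
    rw [opL_lin lam hVn (cdOpL hU hVn), opL_lin lam hV0n hFn] at h2
    rw [Function.iterate_succ_apply', Function.iterate_succ_apply',
      Function.iterate_succ_apply']
    exact h2

end S12

theorem stmt12 (l : ℝ) (hl : 0 < l) (U : ℝ → ℝ) (hU : ContDiff ℝ (⊤ : ℕ∞) U)
    (hUeven : ∀ x : ℝ, U (-x) = U x)
    (hUpos : ∀ x ∈ Set.Ioo (-l) l, 0 < U x)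
    (hUl : U l = 0) (hUml : U (-l) = 0)
    (hU'l : deriv U l = 0) (hU'ml : deriv U (-l) = 0)
    (hU''l : 0 < iteratedDeriv 2 U l) (hU''ml : 0 < iteratedDeriv 2 U (-l))
    (hODE : ∀ x ∈ Set.Ioo (-l) l, iteratedDeriv 3 U x = (U x)^2 * deriv U x + x/5)
    (k : ℕ) (lam : ℝ) (hlam : 0 < lam)
    (V V0 F : ℝ → ℝ) (hV : ContDiff ℝ (⊤ : ℕ∞) V) (hV0 : ContDiff ℝ (⊤ : ℕ∞) V0) (hF : ContDiff ℝ (⊤ : ℕ∞) F)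
    (heq : ∀ x ∈ Set.Ioo (-l) l, lam * V x + opL U V x = lam * V0 x + F x) :
    (Even k →
      lam * u2Sq l U ((opL U)^[k/2] V) + uSq l U ((opL U)^[k/2 + 1] V)
        ≤ lam * u2Sq l U ((opL U)^[k/2] V0) + uSq l U ((opL U)^[k/2] F)) ∧
    (Odd k →
      lam * uSq l U ((opL U)^[(k+1)/2] V) + u2Sq l U ((opL U)^[(k+1)/2] V)
        ≤ lam * uSq l U ((opL U)^[(k+1)/2] V0) + u2Sq l U ((opL U)^[(k-1)/2] F)) := by
  have hU' : ContDiff ℝ ∞ U := hU.of_le (by simp)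
  have hV' : ContDiff ℝ ∞ V := hV.of_le (by simp)
  have hV0' : ContDiff ℝ ∞ V0 := hV0.of_le (by simp)
  have hF' : ContDiff ℝ ∞ F := hF.of_le (by simp)
  constructor
  · intro hk
    have h := S12.coreEven l hl U hU' hUpos hUl hUml hU'l hU'ml hODE lam hlam
      ((opL U)^[k/2] V) ((opL U)^[k/2] V0) ((opL U)^[k/2] F)
      (S12.cdIterOpL hU' hV' (k/2)) (S12.cdIterOpL hU' hV0' (k/2))
      (S12.cdIterOpL hU' hF' (k/2))
      (S12.eqIter l hU' lam hV' hV0' hF' heq (k/2))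
    rw [Function.iterate_succ_apply']
    exact h
  · intro hk
    obtain ⟨j, hj⟩ := hk
    have e1 : (k+1)/2 = j+1 := by omega
    have e2 : (k-1)/2 = j := by omega
    rw [e1, e2]
    have hEq2 : ∀ x ∈ Set.Ioo (-l) l,
        lam * (opL U)^[j+1] V x + opL U ((opL U)^[j+1] V) x
          = lam * (opL U)^[j+1] V0 x + opL U ((opL U)^[j] F) x := by
      intro x hx
      have h := S12.eqIter l hU' lam hV' hV0' hF' heq (j+1) x hx
      rwa [show (opL U)^[j+1] F = opL U ((opL U)^[j] F) from
        Function.iterate_succ_apply' _ _ _] at h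
    exact S12.coreOdd l hl U hU' hUpos hUl hUml hU'l hU'ml hODE lam hlam
      ((opL U)^[j+1] V) ((opL U)^[j+1] V0) ((opL U)^[j] F)
      (S12.cdIterOpL hU' hV' (j+1)) (S12.cdIterOpL hU' hV0' (j+1))
      (S12.cdIterOpL hU' hF' j) hEq2
end
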